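/- arXiv:1704.03075 — 6 statements merged into one kernel-verified Lean document; each statement's English description precedes it below -/
import Mathlib

section
/- Let R be an integral domain whose characteristic does not divide n, and A = R[σ]/(σⁿ−1). Then the annihilator of n σ^{n−1} in A is zero, and consequently HH^i(A;A) = 0 for all odd i, HH⁰(A;A) ≅ A, and HH^{2k}(A;A) ≅ A/(nA) for k ≥ 1. In particular HH^*(A;A) ≅ R[x,z]/(xⁿ−1, nz) as graded rings with |x|=0, |z|=2. -/
noncomputable section

open DirectSum

/-- The group ring `A = R[σ]/(σⁿ−1) = R[ℤ/nℤ]`. -/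
abbrev CycA (R : Type) [CommRing R] (n : ℕ) : Type := AddMonoidAlgebra R (ZMod n)

/-- The generator `σ` of the group ring. -/
def sig (R : Type) [CommRing R] (n : ℕ) : CycA R n := AddMonoidAlgebra.single (1 : ZMod n) 1

/-- The element `n·σ^(n-1)`. -/
def nsig (R : Type) [CommRing R] (n : ℕ) : CycA R n := (n : CycA R n) * (sig R n) ^ (n - 1)

/-- The differentials of the 2-periodic Hochschild cochain complex
`A →0→ A →(nσ^{n-1})→ A →0→ A → ⋯`; `cohD i : C^i → C^{i+1}`. -/
def cohD (R : Type) [CommRing R] (n : ℕ) (i : ℕ) : CycA R n →ₗ[R] CycA R n :=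
  if Even i then 0 else LinearMap.mulLeft R (nsig R n)

/-- The `i`-th Hochschild cohomology `HH^i(A;A)` of `A = R[ℤ/nℤ]`, computed as the
cohomology of the 2-periodic complex: `ker(d^i)/im(d^{i-1})`. -/
abbrev HHcoh (R : Type) [CommRing R] (n : ℕ) (i : ℕ) : Type :=
  LinearMap.ker (cohD R n i) ⧸
    (LinearMap.range (cohD R n (i - 1))).comap (LinearMap.ker (cohD R n i)).subtype

/-!
Since `σ` is a unit, `n σ^{n-1}` and `n` generate the same ideal of `A` and have the same
annihilator, which is zero because `A` is a free `R`-module and `n ≠ 0` in `R`. So the periodic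
complex has cohomology `A` in degree `0`, `A/nA` in positive even degrees and `0` in odd degrees.
Sending `[a] ∈ HH^{2k}` to `a z^k` identifies `⊕ HH^i` with `A[z]/(n z)`, and `x ↦ σ`, `z ↦ z`
identifies `R[x,z]/(xⁿ − 1, n z)` with `A[z]/(n z)` as `R`-algebras.
-/

open Polynomial LinearMap

section MulUnit

variable (R : Type*) {A : Type*} [CommSemiring R] [CommRing A] [Algebra R A]

theorem LinearMap.ker_mulLeft_mul_of_isUnit (a : A) {u : A} (hu : IsUnit u) :
    ker (mulLeft R (a * u)) = ker (mulLeft R a) := by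
  ext x
  simp only [mem_ker, mulLeft_apply, mul_right_comm a u x, hu.mul_left_eq_zero]

theorem LinearMap.range_mulLeft_mul_of_isUnit (a : A) {u : A} (hu : IsUnit u) :
    range (mulLeft R (a * u)) = range (mulLeft R a) := by
  rw [mulLeft_mul]
  refine range_comp_of_range_eq_top _ (range_eq_top.mpr fun x => ⟨↑hu.unit⁻¹ * x, ?_⟩)
  rw [mulLeft_apply, ← mul_assoc, hu.mul_val_inv, one_mul]

theorem LinearMap.ker_mulLeft_natCast_eq_bot {R : Type*} [CommRing R] [IsDomain R]
    [Algebra R A] [Module.IsTorsionFree R A] {n : ℕ} (hn : (n : R) ≠ 0) :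
    ker (mulLeft R (n : A)) = ⊥ := by
  refine ker_eq_bot'.mpr fun x hx => ?_
  rwa [mulLeft_apply, ← nsmul_eq_mul, ← Nat.cast_smul_eq_nsmul R, smul_eq_zero_iff_right hn]
    at hx

end MulUnit

def zmodPowHom {M : Type*} [Monoid M] {n : ℕ} [NeZero n] {x : M} (hx : x ^ n = 1) :
    Multiplicative (ZMod n) →* M where
  toFun a := x ^ a.toAdd.val
  map_one' := by rw [toAdd_one, ZMod.val_zero, pow_zero]
  map_mul' a b := by rw [toAdd_mul, ZMod.val_add, ← pow_eq_pow_mod _ hx, pow_add]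

theorem zmodPowHom_ofAdd_natCast {M : Type*} [Monoid M] {n : ℕ} [NeZero n] {x : M}
    (hx : x ^ n = 1) (k : ℕ) : zmodPowHom hx (.ofAdd (k : ZMod n)) = x ^ k := by
  rw [zmodPowHom, MonoidHom.coe_mk, OneHom.coe_mk, toAdd_ofAdd, ZMod.val_natCast,
    ← pow_eq_pow_mod _ hx]

section Generator

variable (R : Type) [CommRing R] (n : ℕ)

theorem sig_pow (k : ℕ) : sig R n ^ k = AddMonoidAlgebra.single (k : ZMod n) 1 := by
  rw [sig, AddMonoidAlgebra.single_pow, one_pow, nsmul_one]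

theorem sig_pow_self : sig R n ^ n = 1 := by
  rw [sig_pow, ZMod.natCast_self]
  rfl

theorem isUnit_sig : IsUnit (sig R n) :=
  IsUnit.of_mul_eq_one (AddMonoidAlgebra.single (-1) 1) <| by
    rw [sig, AddMonoidAlgebra.single_mul_single, add_neg_cancel, one_mul]
    rfl

theorem ker_mulLeft_nsig [IsDomain R] (hn : (n : R) ≠ 0) :
    ker (mulLeft R (nsig R n)) = ⊥ := by
  rw [nsig, ker_mulLeft_mul_of_isUnit R _ ((isUnit_sig R n).pow _),
    ker_mulLeft_natCast_eq_bot hn]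

theorem range_mulLeft_nsig : range (mulLeft R (nsig R n)) = range (mulLeft R (n : CycA R n)) :=
  range_mulLeft_mul_of_isUnit R _ ((isUnit_sig R n).pow _)

end Generator

section Cohomology

variable (R : Type) [CommRing R] (n : ℕ)

theorem cohD_of_even {i : ℕ} (hi : Even i) : cohD R n i = 0 := if_pos hi

theorem cohD_of_not_even {i : ℕ} (hi : ¬Even i) : cohD R n i = mulLeft R (nsig R n) := if_neg hi

theorem range_cohD_of_even {i : ℕ} (hi : Even i) : range (cohD R n i) = ⊥ := by
  rw [cohD_of_even R n hi, range_zero]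

theorem range_cohD_of_not_even {i : ℕ} (hi : ¬Even i) :
    range (cohD R n i) = range (mulLeft R (n : CycA R n)) := by
  rw [cohD_of_not_even R n hi, range_mulLeft_nsig]

theorem ker_cohD_of_even {i : ℕ} (hi : Even i) : ker (cohD R n i) = ⊤ := by
  rw [cohD_of_even R n hi, ker_zero]

theorem subsingleton_hhcoh_of_not_even [IsDomain R] (hn : (n : R) ≠ 0) {i : ℕ} (hi : ¬Even i) :
    Subsingleton (HHcoh R n i) := by
  have : Subsingleton (ker (cohD R n i)) := by
    rw [cohD_of_not_even R n hi, ker_mulLeft_nsig R n hn]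
    infer_instance
  exact (Submodule.mkQ_surjective _).subsingleton

def hhClass (k : ℕ) : CycA R n →ₗ[R] HHcoh R n (2 * k) :=
  Submodule.mkQ _ ∘ₗ
    (LinearEquiv.ofTop _ (ker_cohD_of_even R n (even_two_mul k))).symm.toLinearMap

theorem hhClass_surjective (k : ℕ) : Function.Surjective (hhClass R n k) :=
  (Submodule.mkQ_surjective _).comp (LinearEquiv.surjective _)

theorem ker_hhClass (k : ℕ) : ker (hhClass R n k) = range (cohD R n (2 * k - 1)) := by
  ext a
  simp [hhClass, Submodule.Quotient.mk_eq_zero]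

def hhEvenEquiv (k : ℕ) : HHcoh R n (2 * k) ≃ₗ[R] CycA R n ⧸ range (cohD R n (2 * k - 1)) :=
  ((hhClass R n k).quotKerEquivOfSurjective (hhClass_surjective R n k)).symm.trans
    (Submodule.quotEquivOfEq _ _ (ker_hhClass R n k))

def hhZeroEquiv : HHcoh R n 0 ≃ₗ[R] CycA R n :=
  (hhEvenEquiv R n 0).trans (Submodule.quotEquivOfEqBot _ (range_cohD_of_even R n Even.zero))

def hhEvenPosEquiv {k : ℕ} (hk : k ≠ 0) :
    HHcoh R n (2 * k) ≃ₗ[R] CycA R n ⧸ range (mulLeft R (n : CycA R n)) :=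
  (hhEvenEquiv R n k).trans (Submodule.quotEquivOfEq _ _ (range_cohD_of_not_even R n (by
    rw [Nat.even_sub (by omega)]; simp)))

end Cohomology

section DirectSumEquiv

variable (R : Type) [CommRing R] (n : ℕ)

-- Instance search fails to find this uniformly in `i`, as `⨁ i, HHcoh R n i` requires.
instance (i : ℕ) : AddCommGroup (HHcoh R n i) := inferInstance

def nzIdeal : Ideal (CycA R n)[X] := Ideal.span {C (n : CycA R n) * X}

theorem mem_nzIdeal {p : (CycA R n)[X]} :
    p ∈ nzIdeal R n ↔ ∃ q, q * (C (n : CycA R n) * X) = p :=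
  Ideal.mem_span_singleton'

theorem monomial_succ_natCast_mul_mem_nzIdeal (m : ℕ) (b : CycA R n) :
    monomial (m + 1) ((n : CycA R n) * b) ∈ nzIdeal R n := by
  refine (mem_nzIdeal R n).mpr ⟨monomial m b, ?_⟩
  rw [mul_comm, mul_assoc, X_mul_monomial, C_mul_monomial]

-- `A[z]/(n z)` as a quotient of `R`-modules, so that `Submodule.liftQ` applies over `R`.
abbrev PolyQuot : Type := (CycA R n)[X] ⧸ (nzIdeal R n).restrictScalars R

-- `[a] ↦ a z^{i/2}`: in positive even degrees the coboundaries `n σ^{n-1} A = n A` vanish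
-- in `A[z]/(n z)`.
def hhToPolyQuot (i : ℕ) : HHcoh R n i →ₗ[R] PolyQuot R n :=
  Submodule.liftQ _
    (Submodule.mkQ _ ∘ₗ (monomial (i / 2)).restrictScalars R ∘ₗ (ker (cohD R n i)).subtype) <| by
    rintro x hx
    rw [Submodule.mem_comap, Submodule.coe_subtype] at hx
    rw [mem_ker, coe_comp, Function.comp_apply, Submodule.mkQ_apply,
      Submodule.Quotient.mk_eq_zero]
    by_cases hi : Even (i - 1)
    · rw [range_cohD_of_even R n hi, Submodule.mem_bot] at hx
      simp [hx]
    · obtain ⟨y, hy⟩ := (range_cohD_of_not_even R n hi) ▸ hx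
      have h2 : 2 ≤ i := by
        by_contra h
        interval_cases i <;> simp at hi
      change monomial (i / 2) (x : CycA R n) ∈ nzIdeal R n
      rw [← hy, show i / 2 = i / 2 - 1 + 1 by omega]
      exact monomial_succ_natCast_mul_mem_nzIdeal R n _ y

theorem hhToPolyQuot_hhClass (k : ℕ) (a : CycA R n) :
    hhToPolyQuot R n (2 * k) (hhClass R n k a) = Submodule.Quotient.mk (monomial k a) := by
  simp [hhToPolyQuot, hhClass]

def polyToHH : (CycA R n)[X] →ₗ[R] ⨁ i, HHcoh R n i :=
  Polynomial.lsum fun k => lof R ℕ (fun i => HHcoh R n i) (2 * k) ∘ₗ hhClass R n k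

theorem polyToHH_monomial (k : ℕ) (a : CycA R n) :
    polyToHH R n (monomial k a) = lof R ℕ (fun i => HHcoh R n i) (2 * k) (hhClass R n k a) := by
  simp [polyToHH]

theorem nzIdeal_le_ker_polyToHH : (nzIdeal R n).restrictScalars R ≤ ker (polyToHH R n) := by
  intro p hp
  obtain ⟨q, rfl⟩ := (mem_nzIdeal R n).mp hp
  clear hp
  induction q using Polynomial.induction_on' with
  | add p q hp hq => rw [add_mul, LinearMap.mem_ker, map_add, hp, hq, add_zero]
  | monomial m b =>
    have hmem : b * n ∈ range (cohD R n (2 * (m + 1) - 1)) := by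
      rw [range_cohD_of_not_even R n (by rw [Nat.even_sub (by omega)]; simp)]
      exact ⟨b, mul_comm _ _⟩
    rw [LinearMap.mem_ker, ← mul_assoc, monomial_mul_C, monomial_mul_X, polyToHH_monomial,
      LinearMap.mem_ker.mp ((ker_hhClass R n (m + 1)).ge hmem), map_zero]

def polyQuotToHH : PolyQuot R n →ₗ[R] ⨁ i, HHcoh R n i :=
  Submodule.liftQ ((nzIdeal R n).restrictScalars R) (polyToHH R n) (nzIdeal_le_ker_polyToHH R n)

def hhSumToPolyQuot : (⨁ i, HHcoh R n i) →ₗ[R] PolyQuot R n :=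
  toModule R ℕ _ (hhToPolyQuot R n)

theorem hhSumToPolyQuot_comp_polyQuotToHH :
    hhSumToPolyQuot R n ∘ₗ polyQuotToHH R n = LinearMap.id := by
  refine Submodule.linearMap_qext _ (LinearMap.ext fun p => ?_)
  induction p using Polynomial.induction_on' with
  | add p q hp hq => simp only [map_add, hp, hq]
  | monomial k a =>
    simp [polyQuotToHH, polyToHH_monomial, hhSumToPolyQuot, hhToPolyQuot_hhClass]

theorem polyQuotToHH_comp_hhSumToPolyQuot [IsDomain R] (hn : (n : R) ≠ 0) :
    polyQuotToHH R n ∘ₗ hhSumToPolyQuot R n = LinearMap.id := by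
  refine DirectSum.linearMap_ext R fun i => LinearMap.ext fun x => ?_
  by_cases hi : Even i
  · obtain ⟨k, rfl⟩ := hi.two_dvd
    obtain ⟨a, rfl⟩ := hhClass_surjective R n k x
    simp [polyQuotToHH, polyToHH_monomial, hhSumToPolyQuot, hhToPolyQuot_hhClass]
  · have := subsingleton_hhcoh_of_not_even R n hn hi
    rw [Subsingleton.elim x 0, map_zero, map_zero]

def hhSumEquivPolyQuot [IsDomain R] (hn : (n : R) ≠ 0) :
    (⨁ i, HHcoh R n i) ≃ₗ[R] PolyQuot R n :=
  .ofLinearMap (hhSumToPolyQuot R n) (polyQuotToHH R n) (hhSumToPolyQuot_comp_polyQuotToHH R n)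
    (polyQuotToHH_comp_hhSumToPolyQuot R n hn)

end DirectSumEquiv

section Presentation

variable (R : Type) [CommRing R] (n : ℕ)

theorem algHom_ext_sig [NeZero n] {B : Type*} [Semiring B] [Algebra R B]
    {f g : CycA R n →ₐ[R] B} (h : f (sig R n) = g (sig R n)) : f = g := by
  refine AddMonoidAlgebra.algHom_ext (fun a => ?_) (Subsingleton.elim _ _)
  rw [← ZMod.natCast_zmod_val a, ← sig_pow, map_pow, map_pow, h]

-- `(xⁿ − 1, n z)` with `x = X 0` and `z = X 1`.
def hhRelIdeal : Ideal (MvPolynomial (Fin 2) R) :=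
  Ideal.span {MvPolynomial.X 0 ^ n - 1, (n : MvPolynomial (Fin 2) R) * MvPolynomial.X 1}

abbrev Presented : Type := MvPolynomial (Fin 2) R ⧸ hhRelIdeal R n

theorem presented_x_pow_self :
    (Ideal.Quotient.mk (hhRelIdeal R n) (MvPolynomial.X 0)) ^ n = 1 := by
  rw [← map_pow, ← sub_eq_zero, ← map_one (Ideal.Quotient.mk _), ← map_sub,
    Ideal.Quotient.eq_zero_iff_mem]
  exact Ideal.subset_span (Set.mem_insert _ _)

theorem presented_natCast_mul_z :
    (n : Presented R n) * Ideal.Quotient.mk (hhRelIdeal R n) (MvPolynomial.X 1) = 0 := by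
  rw [← map_natCast (Ideal.Quotient.mk _), ← map_mul, Ideal.Quotient.eq_zero_iff_mem]
  exact Ideal.subset_span (Set.mem_insert_of_mem _ rfl)

def mvToPoly : MvPolynomial (Fin 2) R →ₐ[R] (CycA R n)[X] :=
  MvPolynomial.aeval ![C (sig R n), X]

def presentedToPolyQuot : Presented R n →ₐ[R] (CycA R n)[X] ⧸ nzIdeal R n :=
  Ideal.Quotient.liftₐ _ ((Ideal.Quotient.mkₐ R _).comp (mvToPoly R n)) fun a ha => by
    obtain ⟨u, v, rfl⟩ := Ideal.mem_span_pair.mp ha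
    have hx : mvToPoly R n (MvPolynomial.X 0 ^ n - 1) = 0 := by
      simp [mvToPoly, ← C_pow, sig_pow_self]
    have hz : mvToPoly R n ((n : MvPolynomial (Fin 2) R) * MvPolynomial.X 1) =
        C (n : CycA R n) * X := by
      simp [mvToPoly]
    rw [AlgHom.comp_apply, map_add, map_mul, map_mul (mvToPoly R n) v, hx, hz, mul_zero,
      zero_add, Ideal.Quotient.mkₐ_eq_mk, Ideal.Quotient.eq_zero_iff_mem]
    exact Ideal.mul_mem_left _ _ (Ideal.mem_span_singleton_self _)

theorem presentedToPolyQuot_mk (p : MvPolynomial (Fin 2) R) :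
    presentedToPolyQuot R n (Ideal.Quotient.mk _ p) = Ideal.Quotient.mk _ (mvToPoly R n p) :=
  rfl

def cycToPresented [NeZero n] : CycA R n →ₐ[R] Presented R n :=
  AddMonoidAlgebra.lift R _ _ (zmodPowHom (presented_x_pow_self R n))

theorem cycToPresented_sig [NeZero n] :
    cycToPresented R n (sig R n) = Ideal.Quotient.mk (hhRelIdeal R n) (MvPolynomial.X 0) := by
  rw [cycToPresented, sig, AddMonoidAlgebra.lift_single, one_smul, ← Nat.cast_one,
    zmodPowHom_ofAdd_natCast, pow_one]

def polyQuotToPresented [NeZero n] : (CycA R n)[X] ⧸ nzIdeal R n →ₐ[R] Presented R n :=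
  Ideal.Quotient.liftₐ _ (eval₂AlgHom (cycToPresented R n)
      (Ideal.Quotient.mk _ (MvPolynomial.X 1)) fun _ => Commute.all _ _) fun a ha => by
    obtain ⟨q, rfl⟩ := (mem_nzIdeal R n).mp ha
    simp [presented_natCast_mul_z]

theorem polyQuotToPresented_mk [NeZero n] (p : (CycA R n)[X]) :
    polyQuotToPresented R n (Ideal.Quotient.mk _ p) =
      p.eval₂ (cycToPresented R n) (Ideal.Quotient.mk _ (MvPolynomial.X 1)) :=
  rfl

def presentedEquivPolyQuot [NeZero n] : Presented R n ≃ₐ[R] (CycA R n)[X] ⧸ nzIdeal R n :=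
  .ofAlgHom (presentedToPolyQuot R n) (polyQuotToPresented R n)
    (Ideal.Quotient.algHom_ext R <| Polynomial.algHom_ext'
      (algHom_ext_sig R n <| by
        simp [polyQuotToPresented_mk, cycToPresented_sig, presentedToPolyQuot_mk, mvToPoly])
      (by simp [polyQuotToPresented_mk, presentedToPolyQuot_mk, mvToPoly]))
    (Ideal.Quotient.algHom_ext R <| MvPolynomial.algHom_ext fun i => by
      fin_cases i <;>
        simp [presentedToPolyQuot_mk, polyQuotToPresented_mk, cycToPresented_sig, mvToPoly])

def hhSumEquivPresented [IsDomain R] (hn : (n : R) ≠ 0) :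
    (⨁ i, HHcoh R n i) ≃ₗ[R] Presented R n :=
  haveI : NeZero n := ⟨by rintro rfl; exact hn Nat.cast_zero⟩
  (hhSumEquivPolyQuot R n hn).trans <| (Submodule.Quotient.restrictScalarsEquiv R _).trans
    (presentedEquivPolyQuot R n).toLinearEquiv.symm

end Presentation

theorem hochschild_cohomology_cyclic_integral_domain
    (R : Type) [CommRing R] [IsDomain R] (n : ℕ) (hchar : ¬ (ringChar R ∣ n)) :
    LinearMap.ker (LinearMap.mulLeft R (nsig R n)) = ⊥ ∧
    (∀ k : ℕ, Subsingleton (HHcoh R n (2 * k + 1))) ∧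
    Nonempty (HHcoh R n 0 ≃ₗ[R] CycA R n) ∧
    (∀ k : ℕ, 1 ≤ k →
      Nonempty (HHcoh R n (2 * k) ≃ₗ[R]
        (CycA R n ⧸ LinearMap.range (LinearMap.mulLeft R ((n : CycA R n)))))) ∧
    Nonempty ((⨁ i : ℕ, HHcoh R n i) ≃ₗ[R]
      (MvPolynomial (Fin 2) R ⧸
        Ideal.span {(MvPolynomial.X 0 : MvPolynomial (Fin 2) R) ^ n - 1,
          (n : MvPolynomial (Fin 2) R) * MvPolynomial.X 1})) := by
  have hn : (n : R) ≠ 0 := fun h => hchar ((ringChar.spec R n).mp h)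
  exact ⟨ker_mulLeft_nsig R n hn, fun k => subsingleton_hhcoh_of_not_even R n hn (by simp),
    ⟨hhZeroEquiv R n⟩, fun k hk => ⟨hhEvenPosEquiv R n (by omega)⟩, ⟨hhSumEquivPresented R n hn⟩⟩
end
end

section
/- Let R be a commutative ring, A = R[σ]/(σⁿ−1), and let a ∈ HH^{2r+1}(A;A), b ∈ HH^{2s+1}(A;A) be odd-degree Hochschild cohomology classes identified with elements of Ann(nσ^{n−1}) ⊆ A. Then their cup product in HH^{2(r+s+1)}(A;A) ≅ A/(nσ^{n−1}A) is the class of −((n−1)n/2)·ab·σ^{n−2}. -/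
noncomputable section

open scoped Classical

variable (R : Type) [CommRing R] (n : ℕ)

/-- The cup product of (normalized bar) Hochschild cochains of `A = R[ℤ/nℤ]`. -/
def cupCh {m m' : ℕ} (f : (Fin m → Fin n) → CycA R n) (g : (Fin m' → Fin n) → CycA R n) :
    (Fin (m + m') → Fin n) → CycA R n :=
  fun x => f (fun j => x (Fin.castAdd m' j)) * g (fun j => x (Fin.natAdd m j))

/-- `φ̄*_{2r+1}(a)`: the degree-`2r+1` cochain representing the class of
`a ∈ Ann(nσ^{n-1}) ≅ HH^{2r+1}`:
`φ̄*_{2r+1}(a)(σ^{i_1},…,σ^{i_{2r+1}}) = (−1)^{r+1} a i₁ σ^{Σ i_k − rn − 1}` if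
`i_{2k}+i_{2k+1} ≥ n` for `1 ≤ k ≤ r`, and `0` otherwise. -/
def phiOdd (r : ℕ) (a : CycA R n) : (Fin (2 * r + 1) → Fin n) → CycA R n :=
  fun i =>
    if ∀ k : Fin r, n ≤ (i ⟨2 * k.val + 1, by have := k.isLt; omega⟩).val
        + (i ⟨2 * k.val + 2, by have := k.isLt; omega⟩).val then
      ((-1 : ℤ) ^ (r + 1) * (i ⟨0, by omega⟩).val) •
        (a * (sig R n) ^ ((∑ t, (i t).val) - r * n - 1))
    else 0

/-- `ψ̄*_{2r}`: evaluation of a degree-`2r` cochain back to the 2-periodic model: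
`ψ̄*_{2r}(f) = Σ_{0 ≤ i_1,…,i_r ≤ n−1} (−1)^r f(σ^{i_1}, σ, σ^{i_2}, σ, …, σ^{i_r}, σ)
σ^{r(n−1) − Σ i_k}`. -/
def psiEven (hn : 0 < n) (r : ℕ) (f : (Fin (2 * r) → Fin n) → CycA R n) : CycA R n :=
  ∑ i : Fin r → Fin n,
    ((-1 : ℤ) ^ r) •
      (f (fun t => if h : t.val % 2 = 0 then i ⟨t.val / 2, by have := t.isLt; omega⟩
          else ⟨1 % n, Nat.mod_lt _ hn⟩)
        * (sig R n) ^ (r * (n - 1) - ∑ k, (i k).val))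

/-!
On the arguments `(σ^{i₀}, σ, σ^{i₁}, σ, …, σ^{i_{r+s}}, σ)` at which `ψ̄*` evaluates the cup
product, each pair condition of `φ̄*_{2r+1}(a)` and `φ̄*_{2s+1}(b)` reads `1 + i_k ≥ n` or
`i_k + 1 ≥ n`, so only the tuples with `i₁ = ⋯ = i_{r+s} = n - 1` contribute. On such a tuple the
two cochains take the values `±i₀ a σ^{i₀-1}` and `±b`, the three signs multiply to `-1`, and the
powers of `σ` add up to `σ^{n-2}`; summing `-i₀ ab σ^{n-2}` over `i₀ < n` gives
`-(n choose 2) ab σ^{n-2}`, already in `A` itself.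
-/

theorem Fin.sum_univ_two_mul_add_one {M : Type*} [AddCommMonoid M] :
    ∀ {r : ℕ} (f : Fin (2 * r + 1) → M),
      ∑ t, f t =
        f ⟨0, by omega⟩ + ∑ k : Fin r, (f ⟨2 * k + 1, by omega⟩ + f ⟨2 * k + 2, by omega⟩)
  | 0, f => by simp
  | r + 1, f => by
    change ∑ t : Fin (2 * r + 1 + 1 + 1), f t = _
    rw [Fin.sum_univ_castSucc, Fin.sum_univ_castSucc,
      Fin.sum_univ_two_mul_add_one (fun t => f t.castSucc.castSucc), Fin.sum_univ_castSucc]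
    simp only [add_assoc]
    rfl

theorem Fin.sum_val_eq_choose_two (n : ℕ) : ∑ j : Fin n, (j : ℕ) = n.choose 2 := by
  rw [Fin.sum_univ_eq_sum_range (fun j => j), Finset.sum_range_id, Nat.choose_two_right]

section Cochains

variable {R n}

theorem phiOdd_of_pair_sum_eq {r : ℕ} (a : CycA R n) (p : Fin (2 * r + 1) → Fin n)
    (hp : ∀ k : Fin r, (p ⟨2 * k + 1, by omega⟩).val + (p ⟨2 * k + 2, by omega⟩).val = n) :
    phiOdd R n r a p =
      ((-1 : ℤ) ^ (r + 1) * (p ⟨0, by omega⟩).val) •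
        (a * sig R n ^ ((p ⟨0, by omega⟩).val - 1)) := by
  have hsum : ∑ t, (p t).val = (p ⟨0, by omega⟩).val + r * n := by
    simp [Fin.sum_univ_two_mul_add_one (fun t => (p t).val), hp]
  unfold phiOdd
  rw [if_pos fun k => (hp k).ge, hsum, Nat.add_sub_cancel]

theorem phiOdd_eq_zero_of_pair_sum_lt {r : ℕ} (a : CycA R n) (p : Fin (2 * r + 1) → Fin n)
    (k : Fin r) (hk : (p ⟨2 * k + 1, by omega⟩).val + (p ⟨2 * k + 2, by omega⟩).val < n) :
    phiOdd R n r a p = 0 :=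
  if_neg fun h => (h k).not_gt hk

theorem phiOdd_eq_zero_of_head_eq_zero {r : ℕ} (a : CycA R n) (p : Fin (2 * r + 1) → Fin n)
    (hp : (p ⟨0, by omega⟩).val = 0) : phiOdd R n r a p = 0 := by
  unfold phiOdd
  split_ifs
  · rw [hp, Nat.cast_zero, mul_zero, zero_smul]
  · rfl

end Cochains

section Evaluation

variable {R n} (hn : 0 < n)

def psiArg {m : ℕ} (i : Fin m → Fin n) (t : Fin (2 * m)) : Fin n :=
  if t.val % 2 = 0 then i ⟨t.val / 2, by omega⟩ else ⟨1 % n, Nat.mod_lt _ hn⟩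

theorem psiEven_eq_sum_psiArg (m : ℕ) (f : (Fin (2 * m) → Fin n) → CycA R n) :
    psiEven R n hn m f = ∑ i : Fin m → Fin n,
      ((-1 : ℤ) ^ m) • (f (psiArg hn i) * sig R n ^ (m * (n - 1) - ∑ k, (i k).val)) :=
  rfl

theorem psiArg_of_val_eq_two_mul {m : ℕ} (i : Fin m → Fin n) (t : Fin (2 * m)) {k : ℕ}
    (ht : t.val = 2 * k) : psiArg hn i t = i ⟨k, by omega⟩ := by
  rw [psiArg, if_pos (by omega)]
  congr
  omega

theorem psiArg_val_of_odd (hn2 : 2 ≤ n) {m : ℕ} (i : Fin m → Fin n) (t : Fin (2 * m))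
    (ht : t.val % 2 = 1) : (psiArg hn i t).val = 1 := by
  rw [psiArg, if_neg (by omega)]
  exact Nat.mod_eq_of_lt hn2

end Evaluation

section CupProduct

variable {R n} (hn : 0 < n) {r s : ℕ} (a b : CycA R n) (i : Fin (r + s + 1) → Fin n)
  (h : 2 * r + 1 + (2 * s + 1) = 2 * (r + s + 1))

theorem cupCh_phiOdd_psiArg_of_tail_eq_sub_one (hn2 : 2 ≤ n)
    (hi : ∀ k : Fin (r + s), (i k.succ).val = n - 1) :
    cupCh R n (phiOdd R n r a) (phiOdd R n s b) (fun t => psiArg hn i (Fin.cast h t)) =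
      ((-1 : ℤ) ^ (r + s) * (i 0).val) • (a * b * sig R n ^ ((i 0).val - 1)) := by
  have hodd (t : Fin (2 * (r + s + 1))) (ht : t.val % 2 = 1) := psiArg_val_of_odd hn hn2 i t ht
  have heven (t : Fin (2 * (r + s + 1))) (k : Fin (r + s)) (ht : t.val = 2 * (k + 1)) :
      (psiArg hn i t).val = n - 1 := by
    rw [psiArg_of_val_eq_two_mul hn i t ht]; exact hi k
  unfold cupCh
  rw [phiOdd_of_pair_sum_eq, phiOdd_of_pair_sum_eq]
  · have hhead : psiArg hn i (Fin.cast h (Fin.castAdd (2 * s + 1) ⟨0, by omega⟩)) = i 0 :=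
      psiArg_of_val_eq_two_mul hn i _ (k := 0) rfl
    beta_reduce
    rw [hhead, hodd _ (by simp), Nat.sub_self,
      pow_zero, mul_one, Nat.cast_one, mul_one, smul_mul_smul_comm]
    congr 1 <;> ring
  · intro k
    beta_reduce
    rw [heven _ ⟨r + k, by omega⟩ (by simp; omega), hodd _ (by simp; omega)]
    omega
  · intro k
    beta_reduce
    rw [hodd _ (by simp), heven _ ⟨k, by omega⟩ (by simp; omega)]
    omega

theorem cupCh_phiOdd_psiArg_eq_zero_of_tail_lt (hn2 : 2 ≤ n) (k : Fin (r + s))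
    (hk : (i k.succ).val < n - 1) :
    cupCh R n (phiOdd R n r a) (phiOdd R n s b) (fun t => psiArg hn i (Fin.cast h t)) = 0 := by
  have hodd (t : Fin (2 * (r + s + 1))) (ht : t.val % 2 = 1) := psiArg_val_of_odd hn hn2 i t ht
  have hlt (t : Fin (2 * (r + s + 1))) (ht : t.val = 2 * (k + 1)) :
      (psiArg hn i t).val + 1 < n := by
    rw [psiArg_of_val_eq_two_mul hn i t ht]; exact Nat.add_lt_of_lt_sub hk
  unfold cupCh
  by_cases hkr : k.val < r
  · rw [phiOdd_eq_zero_of_pair_sum_lt a _ ⟨k, hkr⟩, zero_mul]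
    beta_reduce
    rw [hodd _ (by simp), add_comm]
    exact hlt _ (by simp; omega)
  · rw [phiOdd_eq_zero_of_pair_sum_lt b _ ⟨k - r, by omega⟩, mul_zero]
    beta_reduce
    rw [hodd (Fin.cast h (Fin.natAdd _ ⟨2 * (k - r) + 2, by omega⟩)) (by simp; omega)]
    exact hlt _ (by simp; omega)

theorem psiEven_cupCh_summand_cons (j : Fin n) (w : Fin (r + s) → Fin n) :
    ((-1 : ℤ) ^ (r + s + 1)) •
      (cupCh R n (phiOdd R n r a) (phiOdd R n s b)
          (fun t => psiArg hn (Fin.cons j w) (Fin.cast h t)) *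
        sig R n ^
          ((r + s + 1) * (n - 1) - ∑ k, ((Fin.cons j w : Fin (r + s + 1) → Fin n) k).val)) =
      if w = fun _ => ⟨n - 1, by omega⟩ then (-(j.val : ℤ)) • (a * b * sig R n ^ (n - 2))
      else 0 := by
  by_cases hj : j.val = 0
  · have hcup : cupCh R n (phiOdd R n r a) (phiOdd R n s b)
        (fun t => psiArg hn (Fin.cons j w) (Fin.cast h t)) = 0 := by
      unfold cupCh
      rw [phiOdd_eq_zero_of_head_eq_zero, zero_mul]
      beta_reduce
      rw [psiArg_of_val_eq_two_mul hn _ _ (k := 0) rfl]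
      exact hj
    rw [hcup, zero_mul, smul_zero, hj, Nat.cast_zero, neg_zero, zero_smul, ite_self]
  have hn2 : 2 ≤ n := by omega
  split_ifs with hw
  · have hexp : (r + s + 1) * (n - 1) - ∑ k, ((Fin.cons j w : Fin (r + s + 1) → Fin n) k).val
        = n - 1 - j := by
      simp only [Fin.sum_univ_succ, Fin.cons_zero, Fin.cons_succ, hw, Finset.sum_const,
        Finset.card_univ, Fintype.card_fin, smul_eq_mul]
      rw [add_mul, one_mul]
      omega
    have hpow : sig R n ^ (j.val - 1) * sig R n ^ (n - 1 - j) = sig R n ^ (n - 2) := by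
      rw [← pow_add]; congr 1; omega
    have hsign : ((-1 : ℤ) ^ (r + s + 1)) * (-1) ^ (r + s) = -1 := by
      rw [← pow_add]; exact Odd.neg_one_pow ⟨r + s, by ring⟩
    rw [cupCh_phiOdd_psiArg_of_tail_eq_sub_one hn a b _ h hn2 (fun k => by simp [hw]), hexp,
      Fin.cons_zero, smul_mul_assoc, mul_assoc, hpow, smul_smul]
    congr 1
    linear_combination (j.val : ℤ) * hsign
  · obtain ⟨k, hk⟩ : ∃ k, w k ≠ ⟨n - 1, by omega⟩ := by
      by_contra! hall
      exact hw (funext hall)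
    have hlt : (w k).val < n - 1 := by
      have := (w k).isLt
      have : (w k).val ≠ n - 1 := fun he => hk (Fin.ext he)
      omega
    rw [cupCh_phiOdd_psiArg_eq_zero_of_tail_lt hn a b _ h hn2 k (by simpa using hlt), zero_mul,
      smul_zero]

end CupProduct

theorem cup_product_odd_odd
    (hn : 0 < n) (r s : ℕ) (a b : CycA R n) :
    (Submodule.Quotient.mk
        (psiEven R n hn (r + s + 1)
          (fun x => cupCh R n (phiOdd R n r a) (phiOdd R n s b)
            (fun t => x (Fin.cast (by ring) t))))
      : CycA R n ⧸ LinearMap.range (LinearMap.mulLeft R (nsig R n)))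
    = Submodule.Quotient.mk
        (-((n.choose 2 : ℤ) • (a * b * (sig R n) ^ (n - 2)))) := by
  refine congrArg _ ?_
  rw [psiEven_eq_sum_psiArg, ← (Fin.consEquiv fun _ => Fin n).sum_comp, Fintype.sum_prod_type]
  calc _ = ∑ j : Fin n, ∑ w : Fin (r + s) → Fin n,
        if w = (fun _ => ⟨n - 1, by omega⟩) then
          (-(j.val : ℤ)) • (a * b * sig R n ^ (n - 2)) else 0 :=
        Finset.sum_congr rfl fun j _ => Finset.sum_congr rfl fun w _ =>
          psiEven_cupCh_summand_cons hn a b _ j w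
    _ = ∑ j : Fin n, (-(j.val : ℤ)) • (a * b * sig R n ^ (n - 2)) := by
        simp only [Finset.sum_ite_eq', Finset.mem_univ, if_true]
    _ = _ := by
        rw [← Finset.sum_smul, Finset.sum_neg_distrib, ← Nat.cast_sum,
          Fin.sum_val_eq_choose_two, neg_smul]

end
end

section
/- Let R be a commutative ring of characteristic p > 0 and n = mp. On HH^*(R[Z/nZ]) ≅ R[x,y,z]/(xⁿ−1, y²) (resp. R[x,y,z]/(xⁿ−1, y²−x^{n−2}z) when p=2 and m odd), the BV-operator Δ induced by the canonical symmetric form of the group ring satisfies Δ(z^k x^l) = 0 and Δ(z^k y x^l) = (l−1) z^k x^{l−1}. -/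
noncomputable section

open scoped Classical

variable (R : Type) [CommRing R] (n : ℕ)

/-- `⟨1, a⟩ = ε(a)`: the coefficient of the identity element, i.e. the canonical
symmetric (Frobenius) form of the group ring evaluated against 1. -/
def eps (a : CycA R n) : R := a.coeff 0

/-- The cyclic rotation with insertion used in the dual of the Connes B-operator:
for a degree-`m` tuple `i` (of exponents of σ), `rotIns c j i` is the `(m+1)`-tuple
`(a_{c+1}, …, a_m, σ^j, a_1, …, a_c)`. -/
def rotIns {m : ℕ} (c : Fin (m + 1)) (j : Fin n) (i : Fin m → Fin n) :
    Fin (m + 1) → Fin n :=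
  fun t =>
    if h : t.val + c.val < m then i ⟨t.val + c.val, h⟩
    else if h2 : t.val + c.val = m then j
    else i ⟨t.val + c.val - (m + 1), by have := t.isLt; have := c.isLt; omega⟩

/-- The BV-operator `Δ` on (normalized bar) Hochschild cochains of the symmetric
algebra `A = R[ℤ/nℤ]`, i.e. the dual of the Connes B-operator with respect to the
canonical symmetric form:
`Δ(f)(a_1,…,a_m) = Σ_j Σ_{c} (−1)^{cm} ⟨1, f(a_c,…,a_m,σ^j,a_1,…,a_{c−1})⟩ (σ^j)^∨`,
where `(σ^j)^∨ = σ^{n−j}` is the dual basis for the canonical form. -/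
def deltaBar (m : ℕ) (f : (Fin (m + 1) → Fin n) → CycA R n) :
    (Fin m → Fin n) → CycA R n :=
  fun i => ∑ j : Fin n, ∑ c : Fin (m + 1),
    ((-1 : ℤ) ^ ((c.val + 1) * m)) •
      (eps R n (f (rotIns n c j i)) • (sig R n) ^ (n - j.val))

/-- The even comparison cochain `φ̄*_{2r}(a)`. -/
def phiEven (r : ℕ) (a : CycA R n) : (Fin (2 * r) → Fin n) → CycA R n :=
  fun i =>
    if ∀ k : Fin r, n ≤ (i ⟨2 * k.val, by have := k.isLt; omega⟩).val
        + (i ⟨2 * k.val + 1, by have := k.isLt; omega⟩).val then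
      ((-1 : ℤ) ^ r) • (a * (sig R n) ^ ((∑ t, (i t).val) - r * n))
    else 0

/-- `ψ̄*_{2r+1}`: evaluation of a degree-`2r+1` cochain back to the 2-periodic model. -/
def psiOdd (hn : 0 < n) (r : ℕ) (f : (Fin (2 * r + 1) → Fin n) → CycA R n) : CycA R n :=
  ∑ i : Fin r → Fin n,
    ((-1 : ℤ) ^ (r + 1)) •
      (f (fun t => if h : t.val % 2 = 1 then i ⟨t.val / 2, by have := t.isLt; omega⟩
          else ⟨1 % n, Nat.mod_lt _ hn⟩)
        * (sig R n) ^ (r * (n - 1) - ∑ k, (i k).val))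


/-!
The cochains `φ̄*(σ^l)` see an argument tuple only through the sums of its consecutive pairs
and, in odd degree, its first entry, while `Δ` evaluates them on the cyclic rotations of the test
tuples of `ψ̄*` with an extra entry `σ^j` inserted.

For `Δ(z^k x^l)` the test tuples of `ψ̄*_{2k+1}` carry `σ` in every even slot, so after the
insertion all `2k + 2` rotations have the same pair sums up to a cyclic shift. Every term of the
Connes sum is then the same, and the signs `(-1)^(c+1)` cancel.

For `Δ(z^k y x^l)` all signs are `+1`, and the test tuples of `ψ̄*_{2k}` interleave the exponents
`i_0, …, i_{k-1}, j` with `σ`. A pair `(σ, σ^a)` satisfies `n ≤ 1 + a` only for `a = n - 1`, so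
for a rotation `c` only one exponent (`c` even) or the pair `(i_0, j)` (`c` odd) stays free. An
even rotation contributes `(-1)^(k+1) (1 - l) σ^(l-1)`; an odd one contributes `(-1)^(k+1)` times
the number `n - 1 - r` of pairs `(a, b)` with `a + b = n + r`, where `r ≡ -l`, and this number is
`l - 1` in `R` because `n = 0` there. The `k + 1` even and `k` odd rotations leave
`(-1)^(k+1) (1 - l) σ^(l-1)`, and the sign `(-1)^k` of `ψ̄*` turns it into `(l - 1) σ^(l-1)`.
-/

namespace CyclicGroupRing

open AddMonoidAlgebra Finset

variable {R n}

/-! ### Finite sums -/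

theorem sum_fin_two_mul {M : Type*} [AddCommMonoid M] {r : ℕ} (f : Fin (2 * r) → M) :
    ∑ t, f t
      = ∑ s : Fin r, (f ⟨2 * s.val, by omega⟩ + f ⟨2 * s.val + 1, by omega⟩) := by
  rw [← (finProdFinEquiv.trans (finCongr (mul_comm r 2))).sum_comp, Fintype.sum_prod_type]
  refine sum_congr rfl fun s _ => ?_
  rw [Fin.sum_univ_two]
  congr 1 <;> congr 1 <;> ext <;> simp [finProdFinEquiv, mul_comm, add_comm]

theorem sum_sum_snoc {M : Type*} [AddCommMonoid M] {k : ℕ} (F : (Fin (k + 1) → Fin n) → M) :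
    ∑ i : Fin k → Fin n, ∑ j : Fin n, F (Fin.snoc i j) = ∑ x, F x := by
  rw [sum_comm, ← Fintype.sum_prod_type', ← (Fin.snocEquiv fun _ => Fin n).sum_comp]
  rfl

theorem sum_ite_forall_ne_eq {ι α M : Type*} [Fintype ι] [DecidableEq ι] [Fintype α]
    [AddCommMonoid M] (d : ι) (z : α) [∀ x : ι → α, Decidable (∀ t ≠ d, x t = z)]
    (g : α → M) :
    ∑ x : ι → α, (if ∀ t ≠ d, x t = z then g (x d) else 0) = ∑ a, g a := by
  rw [← sum_filter]
  refine sum_nbij' (fun x => x d) (fun a => Function.update (fun _ => z) d a) (by simp)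
    (fun a _ => mem_filter.2 ⟨mem_univ _, fun t ht => Function.update_of_ne ht _ _⟩)
    (fun x hx => funext fun t => ?_) (fun a _ => Function.update_self ..) fun _ _ => rfl
  by_cases ht : t = d
  · subst ht
    exact Function.update_self ..
  · rw [Function.update_of_ne ht, (mem_filter.1 hx).2 t ht]

theorem sum_ite_val_eq (m : ℕ) :
    (∑ b : Fin n, if b.val = m then 1 else 0 : ℕ) = if m < n then 1 else 0 := by
  rw [Fin.sum_univ_eq_sum_range (fun b => if b = m then 1 else 0) n, sum_ite_eq']
  simp only [mem_range]

theorem cast_sum_val_add_card {ι : Type*} [Fintype ι] (x : ι → Fin n) (d : ι)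
    (h : ∀ t ≠ d, (x t).val = n - 1) :
    ((∑ t, (x t).val : ℕ) : ZMod n) + Fintype.card ι = (x d).val + 1 := by
  have hn : 1 ≤ n := (x d).pos
  calc ((∑ t, (x t).val : ℕ) : ZMod n) + Fintype.card ι
      = ∑ t, (((x t).val : ZMod n) + 1) := by simp [sum_add_distrib]
    _ = (x d).val + 1 := sum_eq_single d (fun t _ ht => by
        rw [h t ht, Nat.cast_sub hn, ZMod.natCast_self]; ring) (by simp)

theorem cast_sum_ite_cast_eq [NeZero n] (g : ZMod n) :
    ((∑ v : Fin n, if ((v.val : ℕ) : ZMod n) = g then v.val else 0 : ℕ) : ZMod n) = g := by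
  rw [sum_eq_single ⟨g.val, ZMod.val_lt g⟩ (fun v _ hv => if_neg fun h => hv (Fin.ext ?_))
    (by simp), if_pos (ZMod.natCast_zmod_val g), ZMod.natCast_zmod_val]
  change v.val = g.val
  rw [← h, ZMod.val_cast_of_lt v.isLt]

theorem cast_sum_ite_le_add_eq [NeZero n] (g : ZMod n) :
    ((∑ a : Fin n, ∑ b : Fin n,
      if n ≤ a.val + b.val ∧ ((a.val + b.val : ℕ) : ZMod n) = g then 1 else 0 : ℕ) : ZMod n)
      = -1 - g := by
  have hg := ZMod.val_lt g
  have hiff : ∀ a b : Fin n, (n ≤ a.val + b.val ∧ ((a.val + b.val : ℕ) : ZMod n) = g) ↔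
      b.val = n + g.val - a.val := by
    intro a b
    have := a.isLt
    have := b.isLt
    constructor
    · rintro ⟨hle, hcast⟩
      have hval := congrArg ZMod.val (show ((a.val + b.val - n : ℕ) : ZMod n) = g by
        rw [Nat.cast_sub hle, ZMod.natCast_self, sub_zero, hcast])
      rw [ZMod.val_cast_of_lt (by omega)] at hval
      omega
    · intro hb
      refine ⟨by omega, ?_⟩
      rw [show a.val + b.val = n + g.val by omega, Nat.cast_add, ZMod.natCast_self, zero_add,
        ZMod.natCast_zmod_val]
  simp only [hiff, sum_ite_val_eq]
  rw [Fin.sum_univ_eq_sum_range (fun a => if n + g.val - a < n then 1 else 0) n, sum_boole,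
    show {a ∈ range n | n + g.val - a < n} = Ioo g.val n by
      ext; simp only [mem_filter, mem_range, mem_Ioo]; omega, Nat.card_Ioo,
    Nat.cast_id, Nat.cast_sub (by omega), Nat.cast_sub (by omega), ZMod.natCast_self,
    ZMod.natCast_zmod_val]
  push_cast
  ring

theorem intCast_eq_of_zmod_eq (hnR : (n : R) = 0) {a b : ℤ} (h : (a : ZMod n) = b) :
    (a : R) = b := by
  simpa using congrArg (ZMod.castHom (ringChar.dvd hnR) R) h

/-! ### Cochains and pair sums -/

theorem sig_pow (a : ℕ) : sig R n ^ a = single (a : ZMod n) 1 := by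
  rw [sig, single_pow, one_pow, nsmul_eq_mul, mul_one]

theorem eps_single (g : ZMod n) (r : R) : eps R n (single g r) = if g = 0 then r else 0 := by
  rw [eps, coeff_single, Finsupp.single_apply, eq_comm]

theorem eps_zsmul (z : ℤ) (a : CycA R n) : eps R n (z • a) = z • eps R n a := by
  rw [eps, eps, coeff_smul]
  rfl

theorem rotIns_eq_snoc {m : ℕ} (c : Fin (m + 1)) (j : Fin n) (i : Fin m → Fin n) :
    rotIns n c j i = fun t => Fin.snoc (α := fun _ => Fin n) i j (t + c) := by
  funext t
  have hval := Fin.val_add_eq_ite t c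
  unfold rotIns
  rcases Fin.eq_castSucc_or_eq_last (t + c) with ⟨q, hq⟩ | hq <;>
    rw [hq] at hval ⊢ <;>
    simp only [Fin.snoc_castSucc, Fin.snoc_last, Fin.val_castSucc, Fin.val_last] at hval ⊢ <;>
    split_ifs at hval ⊢ <;> first | omega | (congr 1; ext; simp only; omega)

theorem sum_val_rotIns {m : ℕ} (c : Fin (m + 1)) (j : Fin n) (i : Fin m → Fin n) :
    ∑ t, (rotIns n c j i t).val = ∑ s, (i s).val + j.val := by
  calc ∑ t, (rotIns n c j i t).val
      = ∑ t, (Fin.snoc (α := fun _ => Fin n) i j (t + c)).val := by rw [rotIns_eq_snoc]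
    _ = ∑ q, (Fin.snoc (α := fun _ => Fin n) i j q).val :=
      Equiv.sum_comp (Equiv.addRight c) (fun q => (Fin.snoc (α := fun _ => Fin n) i j q).val)
    _ = ∑ s, (i s).val + j.val := by
      simp only [Fin.sum_univ_castSucc, Fin.snoc_castSucc, Fin.snoc_last]

def pairSum {r : ℕ} (w : Fin (2 * r) → Fin n) (t : Fin r) : ℕ :=
  (w ⟨2 * t.val, by omega⟩).val + (w ⟨2 * t.val + 1, by omega⟩).val

theorem sum_val_eq_sum_pairSum {r : ℕ} (w : Fin (2 * r) → Fin n) :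
    ∑ t, (w t).val = ∑ s, pairSum w s :=
  sum_fin_two_mul _

theorem sum_val_eq_add_sum_pairSum {r : ℕ} (w : Fin (2 * r + 1) → Fin n) :
    ∑ t, (w t).val = (w 0).val + ∑ s, pairSum (w ∘ Fin.succ) s := by
  rw [Fin.sum_univ_succ, ← sum_val_eq_sum_pairSum]
  rfl

theorem phiEven_eq (r : ℕ) (a : CycA R n) (w : Fin (2 * r) → Fin n) :
    phiEven R n r a w = if ∀ t, n ≤ pairSum w t then
      ((-1 : ℤ) ^ r) • (a * sig R n ^ (∑ t, pairSum w t - r * n)) else 0 := by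
  rw [phiEven, sum_val_eq_sum_pairSum]
  rfl

theorem phiOdd_eq (r : ℕ) (a : CycA R n) (w : Fin (2 * r + 1) → Fin n) :
    phiOdd R n r a w = if ∀ s, n ≤ pairSum (w ∘ Fin.succ) s then
      ((-1 : ℤ) ^ (r + 1) * (w 0).val) • (a * sig R n ^ (∑ t, (w t).val - r * n - 1))
    else 0 :=
  rfl

theorem phiEven_eq_of_pairSum_eq_comp {r : ℕ} (a : CycA R n) {w w' : Fin (2 * r) → Fin n}
    (e : Equiv.Perm (Fin r)) (h : pairSum w' = pairSum w ∘ e) :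
    phiEven R n r a w' = phiEven R n r a w := by
  rw [phiEven_eq, phiEven_eq, h]
  exact if_congr ⟨fun hw t => by simpa using hw (e.symm t), fun hw t => hw (e t)⟩
    (by rw [Function.comp_def, Equiv.sum_comp e (pairSum w)]) rfl

/-! ### `Δ` of the classes `z^k x^l` -/

theorem pairSum_comp_add_of_even_eq {k : ℕ} (y : Fin (2 * (k + 1)) → Fin n) (e : Fin n)
    (hy : ∀ q : Fin (2 * (k + 1)), q.val % 2 = 0 → y q = e) (c : Fin (2 * (k + 1))) :
    pairSum (fun p => y (p + c)) = fun t => pairSum y (t + ⟨c.val / 2, by omega⟩) := by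
  funext t
  set u : Fin (k + 1) := t + ⟨c.val / 2, by omega⟩
  have hu : u.val = (t.val + c.val / 2) % (k + 1) := Fin.val_add _ _
  have hA : (⟨2 * t.val, by omega⟩ + c : Fin (2 * (k + 1))).val = c.val % 2 + 2 * u.val := by
    rw [Fin.val_add, Fin.val_mk, Nat.mod_mul,
      show (2 * t.val + c.val) / 2 = t.val + c.val / 2 by omega, ← hu]
    omega
  have hB : (⟨2 * t.val + 1, by omega⟩ + c : Fin (2 * (k + 1))).val
      = (c.val + 1) % 2 + 2 * ((t.val + (c.val + 1) / 2) % (k + 1)) := by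
    rw [Fin.val_add, Fin.val_mk, Nat.mod_mul,
      show (2 * t.val + 1 + c.val) / 2 = t.val + (c.val + 1) / 2 by omega]
    omega
  have hu_lt := u.isLt
  have hu2 : y ⟨2 * u.val, by omega⟩ = e := hy _ (by simp)
  unfold pairSum
  beta_reduce
  rw [hu2]
  rcases Nat.mod_two_eq_zero_or_one c.val with h | h
  · rw [show (c.val + 1) / 2 = c.val / 2 by omega, ← hu] at hB
    rw [hy (⟨2 * t.val, _⟩ + c) (by omega),
      show (⟨2 * t.val + 1, _⟩ + c : Fin (2 * (k + 1))) = ⟨2 * u.val + 1, by omega⟩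
        from Fin.ext (by show _ = 2 * u.val + 1; omega)]
  · rw [hy (⟨2 * t.val + 1, _⟩ + c) (by omega), add_comm,
      show (⟨2 * t.val, _⟩ + c : Fin (2 * (k + 1))) = ⟨2 * u.val + 1, by omega⟩
        from Fin.ext (by show _ = 2 * u.val + 1; omega)]

theorem sum_neg_one_pow_succ_mul_odd (k : ℕ) :
    ∑ c : Fin (2 * k + 1 + 1), (-1 : ℤ) ^ ((c.val + 1) * (2 * k + 1)) = 0 := by
  have hodd : ∀ c : ℕ, (-1 : ℤ) ^ ((c + 1) * (2 * k + 1)) = -(-1) ^ c := fun c => by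
    rw [mul_comm, pow_mul, Odd.neg_one_pow ⟨k, rfl⟩, pow_succ, mul_neg_one]
  rw [Fin.sum_univ_eq_sum_range (fun c => (-1 : ℤ) ^ ((c + 1) * (2 * k + 1))),
    sum_congr rfl fun c _ => hodd c, sum_neg_distrib, neg_one_geom_sum, if_pos ⟨k + 1, by ring⟩,
    neg_zero]

theorem deltaBar_phiEven_eq_zero {k : ℕ} (a : CycA R n) (e : Fin n)
    (ib : Fin (2 * k + 1) → Fin n) (hib : ∀ q : Fin (2 * k + 1), q.val % 2 = 0 → ib q = e) :
    deltaBar R n (2 * k + 1)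
      (fun y => phiEven R n (k + 1) a (fun t => y (Fin.cast (by ring) t))) ib = 0 := by
  refine sum_eq_zero fun j _ => ?_
  set y : Fin (2 * (k + 1)) → Fin n :=
    fun t => Fin.snoc (α := fun _ => Fin n) ib j (Fin.cast (by ring) t)
  have hy : ∀ q, q.val % 2 = 0 → y q = e := by
    intro q hq
    rcases Fin.eq_castSucc_or_eq_last (Fin.cast (by ring) q : Fin (2 * k + 1 + 1))
      with ⟨q', hq'⟩ | hq'
    · simp only [y, hq', Fin.snoc_castSucc]
      exact hib q' (by rw [← Fin.val_castSucc, ← hq']; simpa using hq)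
    · have := congrArg Fin.val hq'
      simp only [Fin.cast_eq_self, Fin.val_last] at this
      omega
  have hrot : ∀ c, phiEven R n (k + 1) a (fun t => rotIns n c j ib (Fin.cast (by ring) t))
      = phiEven R n (k + 1) a y := by
    intro c
    refine (congrArg (phiEven R n (k + 1) a) ?_).trans
      (phiEven_eq_of_pairSum_eq_comp a (Equiv.addRight _) (pairSum_comp_add_of_even_eq y e hy
        (Fin.cast (by ring) c)))
    rw [rotIns_eq_snoc]
    rfl
  simp only [hrot]
  rw [← sum_smul, sum_neg_one_pow_succ_mul_odd, zero_smul]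

theorem psiOdd_deltaBar_phiEven (hn : 0 < n) (k : ℕ) (a : CycA R n) :
    psiOdd R n hn k (deltaBar R n (2 * k + 1)
      (fun y => phiEven R n (k + 1) a (fun t => y (Fin.cast (by ring) t)))) = 0 :=
  sum_eq_zero fun i _ => by
    rw [deltaBar_phiEven_eq_zero a ⟨1 % n, Nat.mod_lt _ hn⟩ _ fun q hq => dif_neg (by omega),
      zero_mul, smul_zero]

/-! ### `Δ` of the classes `z^k y x^l` -/

def interlace (e : Fin n) {k : ℕ} (i : Fin k → Fin n) : Fin (2 * k) → Fin n :=
  fun t => if _h : t.val % 2 = 0 then i ⟨t.val / 2, by omega⟩ else e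

theorem psiEven_eq (hn : 0 < n) (r : ℕ) (f : (Fin (2 * r) → Fin n) → CycA R n) :
    psiEven R n hn r f = ∑ i : Fin r → Fin n, ((-1 : ℤ) ^ r) •
      (f (interlace ⟨1 % n, Nat.mod_lt _ hn⟩ i) * sig R n ^ (r * (n - 1) - ∑ s, (i s).val)) :=
  rfl

section Interlace

variable (e : Fin n) {k : ℕ} (i : Fin k → Fin n) (j : Fin n)

theorem pairSum_interlace (s : Fin k) : pairSum (interlace e i) s = (i s).val + e.val := by
  unfold pairSum interlace
  rw [dif_pos (by simp), dif_neg (by simp [Nat.add_mod])]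
  congr 3
  simp

theorem snoc_interlace_of_even (q : Fin (2 * k + 1)) (u : Fin (k + 1))
    (hq : q.val = 2 * u.val) :
    Fin.snoc (α := fun _ => Fin n) (interlace e i) j q
      = Fin.snoc (α := fun _ => Fin n) i j u := by
  rcases Fin.eq_castSucc_or_eq_last u with ⟨u, rfl⟩ | rfl
  · rw [show q = Fin.castSucc ⟨2 * u.val, by omega⟩ from Fin.ext (by simpa using hq),
      Fin.snoc_castSucc, Fin.snoc_castSucc, interlace, dif_pos (by simp)]
    congr 1
    ext
    simp
  · rw [show q = Fin.last _ from Fin.ext (by simpa using hq), Fin.snoc_last, Fin.snoc_last]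

theorem snoc_interlace_of_odd (q : Fin (2 * k + 1)) (hq : q.val % 2 = 1) :
    Fin.snoc (α := fun _ => Fin n) (interlace e i) j q = e := by
  rw [show q = Fin.castSucc ⟨q.val, by omega⟩ from rfl, Fin.snoc_castSucc, interlace,
    dif_neg (by simpa using hq)]

theorem sum_val_interlace : ∑ t, (interlace e i t).val = ∑ s, (i s).val + k * e.val := by
  simp only [sum_val_eq_sum_pairSum, pairSum_interlace, sum_add_distrib, sum_const, card_univ,
    Fintype.card_fin, smul_eq_mul]

end Interlace

section Rotation

variable (e : Fin n) {k : ℕ} (j : Fin n)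

theorem rotIns_interlace_zero_of_even (i : Fin k → Fin n) (c : Fin (2 * k + 1))
    (d : Fin (k + 1)) (hc : c.val = 2 * d.val) :
    rotIns n c j (interlace e i) 0 = Fin.snoc (α := fun _ => Fin n) i j d := by
  simp only [rotIns_eq_snoc, zero_add]
  exact snoc_interlace_of_even e i j c d hc

theorem rotIns_interlace_zero_of_odd (i : Fin k → Fin n) (c : Fin (2 * k + 1))
    (hc : c.val % 2 = 1) : rotIns n c j (interlace e i) 0 = e := by
  simp only [rotIns_eq_snoc, zero_add]
  exact snoc_interlace_of_odd e i j c hc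

theorem pairSum_rotIns_interlace_of_even (i : Fin k → Fin n) (c : Fin (2 * k + 1))
    (d : Fin (k + 1)) (hc : c.val = 2 * d.val) (s : Fin k) :
    pairSum (rotIns n c j (interlace e i) ∘ Fin.succ) s
      = e.val + (Fin.snoc (α := fun _ => Fin n) i j (s.succ + d)).val := by
  have h1 := Fin.val_add_eq_ite (Fin.succ ⟨2 * s.val, by omega⟩ : Fin (2 * k + 1)) c
  have h2 := Fin.val_add_eq_ite (Fin.succ ⟨2 * s.val + 1, by omega⟩ : Fin (2 * k + 1)) c
  have h3 := Fin.val_add_eq_ite s.succ d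
  simp only [Fin.val_succ] at h1 h2 h3
  simp only [pairSum, Function.comp_apply, rotIns_eq_snoc]
  have := s.isLt
  have := d.isLt
  by_cases hw : s.val + d.val + 1 ≤ k
  · rw [if_neg (by omega)] at h1 h2 h3
    rw [snoc_interlace_of_odd e i j _ (by omega),
      snoc_interlace_of_even e i j _ (s.succ + d) (by omega)]
  · rw [if_pos (by omega)] at h1 h2 h3
    rw [snoc_interlace_of_odd e i j (Fin.succ ⟨2 * s.val + 1, _⟩ + c) (by omega),
      snoc_interlace_of_even e i j _ (s.succ + d) (by omega), add_comm]

theorem pairSum_rotIns_interlace_of_odd (i : Fin (k + 1) → Fin n) (c : Fin (2 * (k + 1) + 1))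
    (d : Fin (k + 1)) (hc : c.val = 2 * d.val + 1) (s : Fin (k + 1)) :
    pairSum (rotIns n c j (interlace e i) ∘ Fin.succ) s
      = if s + d + 1 = 0 then (i 0).val + j.val else e.val + (i (s + d + 1)).val := by
  have h1 := Fin.val_add_eq_ite (Fin.succ ⟨2 * s.val, by omega⟩ : Fin (2 * (k + 1) + 1)) c
  have h2 := Fin.val_add_eq_ite (Fin.succ ⟨2 * s.val + 1, by omega⟩ : Fin (2 * (k + 1) + 1)) c
  have h3 := Fin.val_add_eq_ite s d
  have h4 := Fin.val_add_one (s + d)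
  simp only [Fin.val_succ, Fin.ext_iff, Fin.val_last] at h1 h2 h3 h4
  simp only [pairSum, Function.comp_apply, rotIns_eq_snoc, Fin.ext_iff, Fin.val_zero]
  have := s.isLt
  have := d.isLt
  rcases lt_trichotomy (s.val + d.val + 1) (k + 1) with hw | hw | hw
  · rw [if_neg (by omega)] at h1 h2 h3
    rw [if_neg (by omega)] at h4
    rw [if_neg (by omega),
      snoc_interlace_of_odd e i j (Fin.succ ⟨2 * s.val + 1, _⟩ + c) (by omega),
      snoc_interlace_of_even e i j _ (s + d + 1).castSucc (by rw [Fin.val_castSucc]; omega),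
      Fin.snoc_castSucc, add_comm]
  · rw [if_neg (by omega)] at h1 h3
    rw [if_pos (by omega)] at h2
    rw [if_pos (by omega)] at h4
    rw [if_pos (by omega),
      snoc_interlace_of_even e i j _ (Fin.last _) (by rw [Fin.val_last]; omega),
      snoc_interlace_of_even e i j _ (Fin.castSucc 0)
        (by rw [Fin.val_castSucc, Fin.val_zero]; omega),
      Fin.snoc_castSucc, Fin.snoc_last, add_comm]
  · rw [if_pos (by omega)] at h1 h2 h3
    rw [if_neg (by omega)] at h4
    rw [if_neg (by omega), snoc_interlace_of_odd e i j (Fin.succ ⟨2 * s.val, _⟩ + c) (by omega),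
      snoc_interlace_of_even e i j _ (s + d + 1).castSucc (by rw [Fin.val_castSucc]; omega),
      Fin.snoc_castSucc]

end Rotation

section Conditions

variable {e : Fin n} {k : ℕ}

theorem forall_le_pairSum_rotIns_interlace_of_even (he : e.val = 1) (j : Fin n)
    (i : Fin k → Fin n) (c : Fin (2 * k + 1)) (d : Fin (k + 1)) (hc : c.val = 2 * d.val) :
    (∀ s, n ≤ pairSum (rotIns n c j (interlace e i) ∘ Fin.succ) s) ↔
      ∀ t ≠ d, (Fin.snoc (α := fun _ => Fin n) i j t).val = n - 1 := by
  simp only [pairSum_rotIns_interlace_of_even e j i c d hc, he]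
  constructor
  · intro h t ht
    obtain ⟨s, hs⟩ := Fin.exists_succ_eq.2 (sub_ne_zero.2 ht)
    have := h s
    have := (Fin.snoc (α := fun _ => Fin n) i j t).isLt
    rw [hs, sub_add_cancel] at *
    omega
  · intro h s
    have := h (s.succ + d) fun h' => Fin.succ_ne_zero s (add_eq_right.1 h')
    omega

theorem forall_le_pairSum_rotIns_interlace_of_odd (he : e.val = 1) (j : Fin n)
    (i : Fin (k + 1) → Fin n) (c : Fin (2 * (k + 1) + 1)) (d : Fin (k + 1))
    (hc : c.val = 2 * d.val + 1) :
    (∀ s, n ≤ pairSum (rotIns n c j (interlace e i) ∘ Fin.succ) s) ↔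
      n ≤ (i 0).val + j.val ∧ ∀ u ≠ 0, (i u).val = n - 1 := by
  simp only [pairSum_rotIns_interlace_of_odd e j i c d hc, he, add_assoc]
  rw [show (∀ s : Fin (k + 1), n ≤ if s + (d + 1) = 0 then (i 0).val + j.val
      else 1 + (i (s + (d + 1))).val) ↔
      ∀ u : Fin (k + 1), n ≤ if u = 0 then (i 0).val + j.val else 1 + (i u).val from
    ⟨fun h u => by simpa using h (u - (d + 1)), fun h s => h _⟩]
  constructor
  · intro h
    refine ⟨by simpa using h 0, fun u hu => ?_⟩
    have := h u
    have := (i u).isLt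
    rw [if_neg hu] at *
    omega
  · rintro ⟨h0, hu⟩ u
    split_ifs with h
    · exact h0
    · have := hu u h
      omega

end Conditions

def phiOddWeight (l : ℕ) {k : ℕ} (w : Fin (2 * k + 1) → Fin n) : ℕ :=
  if (∀ s, n ≤ pairSum (w ∘ Fin.succ) s) ∧ ((l + ∑ t, (w t).val : ℕ) : ZMod n) = 1
  then (w 0).val else 0

theorem eps_phiOdd_smul_single (k l : ℕ) (w : Fin (2 * k + 1) → Fin n) :
    eps R n (phiOdd R n k (sig R n ^ l) w) • single (-((∑ t, (w t).val : ℕ) : ZMod n)) (1 : R)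
      = ((-1 : ℤ) ^ (k + 1) * phiOddWeight l w) • single ((l : ZMod n) - 1) 1 := by
  rw [phiOdd_eq, phiOddWeight]
  by_cases hcond : ∀ s, n ≤ pairSum (w ∘ Fin.succ) s
  swap
  · simp [hcond, eps]
  -- `∑ w - k * n - 1` truncates only when `w 0 = 0`, where the coefficient vanishes.
  rcases Nat.eq_zero_or_pos (w 0).val with hw0 | hw0
  · simp [hw0, eps]
  have hsum : k * n + 1 ≤ ∑ t, (w t).val := by
    have : k * n ≤ ∑ s, pairSum (w ∘ Fin.succ) s := by
      simpa using card_nsmul_le_sum univ _ n fun s _ => hcond s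
    rw [sum_val_eq_add_sum_pairSum]
    omega
  have hcast : ((l + (∑ t, (w t).val - k * n - 1) : ℕ) : ZMod n)
      = ((l + ∑ t, (w t).val : ℕ) : ZMod n) - 1 := by
    rw [Nat.cast_add, Nat.cast_sub (show 1 ≤ ∑ t, (w t).val - k * n by omega),
      Nat.cast_sub (show k * n ≤ ∑ t, (w t).val by omega)]
    push_cast [ZMod.natCast_self]
    ring
  rw [if_pos hcond, eps_zsmul, ← pow_add, sig_pow, eps_single, hcast]
  simp only [sub_eq_zero]
  by_cases h1 : ((l + ∑ t, (w t).val : ℕ) : ZMod n) = 1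
  · rw [if_pos h1, if_pos ⟨hcond, h1⟩, show -((∑ t, (w t).val : ℕ) : ZMod n) = l - 1 by
      push_cast at h1 ⊢; linear_combination -h1]
    simp
  · rw [if_neg h1, if_neg fun h => h1 h.2]
    simp

theorem psiEven_deltaBar_phiOdd_eq_neg_sum_weight (hn : 0 < n) (k l : ℕ) :
    psiEven R n hn k (deltaBar R n (2 * k) (phiOdd R n k (sig R n ^ l))) =
      (-((∑ i : Fin k → Fin n, ∑ j : Fin n, ∑ c : Fin (2 * k + 1),
        phiOddWeight l (rotIns n c j (interlace ⟨1 % n, Nat.mod_lt _ hn⟩ i)) : ℕ) : ℤ)) •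
        single ((l : ZMod n) - 1) (1 : R) := by
  rw [psiEven_eq]
  set e : Fin n := ⟨1 % n, Nat.mod_lt _ hn⟩
  have he : ((e.val : ℕ) : ZMod n) = 1 := by simp [e, ZMod.natCast_mod]
  have hterm : ∀ i j (c : Fin (2 * k + 1)),
      (((-1 : ℤ) ^ ((c.val + 1) * (2 * k))) • (eps R n (phiOdd R n k (sig R n ^ l)
        (rotIns n c j (interlace e i))) • sig R n ^ (n - j.val)))
        * sig R n ^ (k * (n - 1) - ∑ s, (i s).val)
      = ((-1 : ℤ) ^ (k + 1) * phiOddWeight l (rotIns n c j (interlace e i))) •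
        single ((l : ZMod n) - 1) 1 := by
    intro i j c
    have hi : ∑ s, (i s).val ≤ k * (n - 1) := by
      simpa using sum_le_card_nsmul univ _ (n - 1) fun s _ => Nat.le_sub_one_of_lt (i s).isLt
    rw [Even.neg_one_pow ⟨(c.val + 1) * k, by ring⟩, one_smul, smul_mul_assoc,
      sig_pow (n - j.val), sig_pow (k * (n - 1) - _), single_mul_single, one_mul,
      ← eps_phiOdd_smul_single, sum_val_rotIns, sum_val_interlace]
    congr 2
    push_cast [Nat.cast_sub j.isLt.le, Nat.cast_sub hi, Nat.cast_sub hn, he, ZMod.natCast_self]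
    ring
  have hsign : ∀ x : ℤ, (-1 : ℤ) ^ k * ((-1) ^ (k + 1) * x) = -x := fun x => by
    rw [← mul_assoc, ← pow_add, Odd.neg_one_pow ⟨k, by ring⟩, neg_one_mul]
  simp only [deltaBar, sum_mul]
  simp only [hterm, smul_smul, ← sum_smul]
  congr 1
  simp only [mul_sum, hsign, sum_neg_distrib, Nat.cast_sum]

theorem cast_sum_phiOddWeight_of_even {e : Fin n} (he : e.val = 1) {k : ℕ} (l : ℕ)
    (c : Fin (2 * k + 1)) (d : Fin (k + 1)) (hc : c.val = 2 * d.val) :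
    ((∑ i : Fin k → Fin n, ∑ j : Fin n, phiOddWeight l (rotIns n c j (interlace e i)) : ℕ) :
      ZMod n) = 1 - l := by
  have hn : 1 < n := he ▸ e.isLt
  have : NeZero n := ⟨by omega⟩
  have hW : ∀ i j, phiOddWeight l (rotIns n c j (interlace e i)) =
      if ∀ t ≠ d, Fin.snoc (α := fun _ => Fin n) i j t = ⟨n - 1, by omega⟩
      then (if (((Fin.snoc (α := fun _ => Fin n) i j d).val : ℕ) : ZMod n) = 1 - l then
          (Fin.snoc (α := fun _ => Fin n) i j d).val else 0)
      else 0 := by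
    intro i j
    rw [phiOddWeight, rotIns_interlace_zero_of_even e j i c d hc, ite_and]
    refine if_ctx_congr ((forall_le_pairSum_rotIns_interlace_of_even he j i c d hc).trans
      (by simp only [Fin.ext_iff])) (fun hx => if_congr ?_ rfl rfl) fun _ => rfl
    have hsum := cast_sum_val_add_card _ d fun t ht => congrArg Fin.val (hx t ht)
    rw [Fin.sum_univ_castSucc] at hsum
    simp only [Fin.snoc_castSucc, Fin.snoc_last, Fintype.card_fin] at hsum
    rw [sum_val_rotIns, sum_val_interlace, he]
    push_cast at hsum ⊢
    constructor <;> intro h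
    · linear_combination h - hsum
    · linear_combination h + hsum
  simp only [hW]
  rw [sum_sum_snoc (fun x => if ∀ t ≠ d, x t = ⟨n - 1, by omega⟩ then
      (if (((x d).val : ℕ) : ZMod n) = 1 - l then (x d).val else 0) else 0)]
  exact (congrArg Nat.cast (sum_ite_forall_ne_eq d _
    fun v : Fin n => if ((v.val : ℕ) : ZMod n) = 1 - l then v.val else 0)).trans
    (cast_sum_ite_cast_eq _)

theorem cast_sum_phiOddWeight_of_odd {e : Fin n} (he : e.val = 1) {k : ℕ} (l : ℕ)
    (c : Fin (2 * (k + 1) + 1)) (d : Fin (k + 1)) (hc : c.val = 2 * d.val + 1) :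
    ((∑ i : Fin (k + 1) → Fin n, ∑ j : Fin n,
      phiOddWeight l (rotIns n c j (interlace e i)) : ℕ) : ZMod n) = l - 1 := by
  have hn : 1 < n := he ▸ e.isLt
  have : NeZero n := ⟨by omega⟩
  have hW : ∀ i j, phiOddWeight l (rotIns n c j (interlace e i)) =
      if ∀ u ≠ 0, i u = ⟨n - 1, by omega⟩ then
        (if n ≤ (i 0).val + j.val ∧ (((i 0).val + j.val : ℕ) : ZMod n) = -l then 1 else 0)
      else 0 := by
    intro i j
    rw [phiOddWeight, rotIns_interlace_zero_of_odd e j i c (by omega), he]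
    simp only [forall_le_pairSum_rotIns_interlace_of_odd he j i c d hc]
    by_cases hA : ∀ u ≠ 0, (i u).val = n - 1
    · rw [if_pos fun u hu => Fin.ext (hA u hu)]
      have hsum := cast_sum_val_add_card i 0 hA
      rw [Fintype.card_fin] at hsum
      refine if_congr ?_ rfl rfl
      rw [sum_val_rotIns, sum_val_interlace, he]
      push_cast at hsum ⊢
      constructor
      · rintro ⟨⟨hle, -⟩, h⟩
        exact ⟨hle, by linear_combination h - hsum⟩
      · rintro ⟨hle, h⟩
        exact ⟨⟨hle, hA⟩, by linear_combination h + hsum⟩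
    · rw [if_neg fun h => hA h.1.2, if_neg fun h => hA fun u hu => congrArg Fin.val (h u hu)]
  simp only [hW, sum_ite_irrel, sum_const_zero]
  refine (congrArg Nat.cast (sum_ite_forall_ne_eq (0 : Fin (k + 1)) _ fun a : Fin n =>
    ∑ j : Fin n, if n ≤ a.val + j.val ∧ ((a.val + j.val : ℕ) : ZMod n) = -l then 1 else 0))
    |>.trans ?_
  rw [cast_sum_ite_le_add_eq]
  ring

theorem cast_sum_phiOddWeight {e : Fin n} (he : e.val = 1) (k l : ℕ) :
    ((∑ i : Fin k → Fin n, ∑ j : Fin n, ∑ c : Fin (2 * k + 1),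
      phiOddWeight l (rotIns n c j (interlace e i)) : ℕ) : ZMod n) = 1 - l := by
  have hc : ∀ c : Fin (2 * k + 1), ((∑ i : Fin k → Fin n, ∑ j : Fin n,
      phiOddWeight l (rotIns n c j (interlace e i)) : ℕ) : ZMod n) = (-1) ^ c.val * (1 - l) := by
    intro c
    obtain ⟨d, hd | hd⟩ := Nat.even_or_odd' c.val
    · rw [cast_sum_phiOddWeight_of_even he l c ⟨d, by omega⟩ hd,
        Even.neg_one_pow ⟨d, by omega⟩, one_mul]
    · obtain ⟨k, rfl⟩ : ∃ k', k = k' + 1 := ⟨k - 1, by omega⟩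
      rw [cast_sum_phiOddWeight_of_odd he l c ⟨d, by omega⟩ hd, Odd.neg_one_pow ⟨d, hd⟩]
      ring
  rw [sum_congr rfl fun i _ => sum_comm, sum_comm, Nat.cast_sum, sum_congr rfl fun c _ => hc c,
    ← sum_mul, Fin.sum_univ_eq_sum_range (fun c => (-1 : ZMod n) ^ c), neg_one_geom_sum,
    if_neg (by simp [parity_simps]), one_mul]

theorem psiEven_deltaBar_phiOdd (hn : 0 < n) (hnR : (n : R) = 0) (k l : ℕ) :
    psiEven R n hn k (deltaBar R n (2 * k) (phiOdd R n k (sig R n ^ l)))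
      = ((l : ℤ) - 1) • (sig R n ^ l * sig R n ^ (n - 1)) := by
  obtain rfl | h2 : n = 1 ∨ 2 ≤ n := by omega
  · have : Subsingleton R := subsingleton_of_zero_eq_one (by simpa using hnR.symm)
    exact Subsingleton.elim _ _
  have hσ : sig R n ^ l * sig R n ^ (n - 1) = single ((l : ZMod n) - 1) 1 := by
    rw [← pow_add, sig_pow, Nat.cast_add, Nat.cast_sub hn, ZMod.natCast_self, Nat.cast_one,
      zero_sub, ← sub_eq_add_neg]
  rw [psiEven_deltaBar_phiOdd_eq_neg_sum_weight, hσ, ← Int.cast_smul_eq_zsmul R,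
    ← Int.cast_smul_eq_zsmul R (_ - 1)]
  congr 1
  refine intCast_eq_of_zmod_eq hnR ?_
  rw [Int.cast_neg, Int.cast_natCast, cast_sum_phiOddWeight (Nat.mod_eq_of_lt h2)]
  push_cast
  ring

end CyclicGroupRing

/-
In the 2-periodic model (note nσ^{n−1} = 0 in characteristic p with p | n, so
HH^i(A;A) = A for all i) the class z^k x^l is represented by the cochain
φ̄*_{2k}(σ^l), the class z^k y x^l by φ̄*_{2k+1}(σ^l), and the resulting classes are
read off by ψ̄*; x^{l−1} means σ^{l−1} = σ^l·σ^{n−1}.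
-/
theorem BV_operator_cyclic_group_ring_char_p
    (p m : ℕ) (hp : 0 < p) (hm : 0 < m) [CharP R p] (hn : n = m * p) :
    -- Δ(z^k x^l) = 0
    (∀ k l : ℕ,
      psiOdd R n (hn ▸ Nat.mul_pos hm hp) k
        (deltaBar R n (2 * k + 1)
          (fun y => phiEven R n (k + 1) ((sig R n) ^ l) (fun t => y (Fin.cast (by ring) t))))
        = 0) ∧
    -- Δ(z^k y x^l) = (l − 1) z^k x^{l−1}
    (∀ k l : ℕ,
      psiEven R n (hn ▸ Nat.mul_pos hm hp) k
        (deltaBar R n (2 * k) (phiOdd R n k ((sig R n) ^ l)))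
        = ((l : ℤ) - 1) • ((sig R n) ^ l * (sig R n) ^ (n - 1))) := by
  have hnR : (n : R) = 0 := (CharP.cast_eq_zero_iff R p n).2 ⟨m, by rw [hn, mul_comm]⟩
  exact ⟨fun k l => CyclicGroupRing.psiOdd_deltaBar_phiEven _ k _,
    fun k l => CyclicGroupRing.psiEven_deltaBar_phiOdd _ hnR k l⟩
end
end

section
/- Let R be a commutative ring of characteristic p > 0 and n = mp. The Gerstenhaber bracket on HH^*(R[Z/nZ]) ≅ R[x,y,z]/(xⁿ−1,y²) (with |x|=0,|y|=1,|z|=2) satisfies {z^{k₁}x^{l₁}, z^{k₂}x^{l₂}} = 0, {z^{k₁}x^{l₁}, z^{k₂}y x^{l₂}} = −l₁ z^{k₁+k₂} x^{l₁+l₂−1}, and {z^{k₁}y x^{l₁}, z^{k₂}y x^{l₂}} = (l₂−l₁) z^{k₁+k₂} y x^{l₁+l₂−1}. -/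
/-
Products of the monomials `z^k x^l` and `z^k y x^l` are again such monomials, except that
`y² = 0` kills the product of two odd ones.  Each bracket is therefore computed by substituting
the given values of `Δ` into its three terms and collecting coefficients.
-/

section BracketOfMonomials

variable {B : Type*} [CommRing B] {x y z : B} {Δ : B → B} {n : ℕ}

theorem bracket_even_even_eq_zero (hΔeven : ∀ k l : ℕ, Δ (z ^ k * x ^ l) = 0)
    (k₁ l₁ k₂ l₂ : ℕ) :
    -(Δ ((z ^ k₁ * x ^ l₁) * (z ^ k₂ * x ^ l₂))
        - Δ (z ^ k₁ * x ^ l₁) * (z ^ k₂ * x ^ l₂)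
        - (z ^ k₁ * x ^ l₁) * Δ (z ^ k₂ * x ^ l₂)) = 0 := by
  have hprod : (z ^ k₁ * x ^ l₁) * (z ^ k₂ * x ^ l₂) = z ^ (k₁ + k₂) * x ^ (l₁ + l₂) := by ring
  rw [hprod, hΔeven, hΔeven, hΔeven]
  ring

theorem bracket_even_odd_eq (hΔeven : ∀ k l : ℕ, Δ (z ^ k * x ^ l) = 0)
    (hΔodd : ∀ k l : ℕ, Δ (z ^ k * y * x ^ l) = ((l : ℤ) - 1) • (z ^ k * x ^ l * x ^ (n - 1)))
    (k₁ l₁ k₂ l₂ : ℕ) :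
    -(Δ ((z ^ k₁ * x ^ l₁) * (z ^ k₂ * y * x ^ l₂))
        - Δ (z ^ k₁ * x ^ l₁) * (z ^ k₂ * y * x ^ l₂)
        - (z ^ k₁ * x ^ l₁) * Δ (z ^ k₂ * y * x ^ l₂))
      = -((l₁ : ℤ) • (z ^ (k₁ + k₂) * x ^ (l₁ + l₂) * x ^ (n - 1))) := by
  have hprod : (z ^ k₁ * x ^ l₁) * (z ^ k₂ * y * x ^ l₂) = z ^ (k₁ + k₂) * y * x ^ (l₁ + l₂) := by
    ring
  rw [hprod, hΔodd, hΔeven, hΔodd]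
  simp only [zsmul_eq_mul, Nat.cast_add, Int.cast_sub, Int.cast_add, Int.cast_natCast,
    Int.cast_one]
  ring

theorem bracket_odd_odd_eq (hy : y ^ 2 = 0) (hΔzero : Δ 0 = 0)
    (hΔodd : ∀ k l : ℕ, Δ (z ^ k * y * x ^ l) = ((l : ℤ) - 1) • (z ^ k * x ^ l * x ^ (n - 1)))
    (k₁ l₁ k₂ l₂ : ℕ) :
    (Δ ((z ^ k₁ * y * x ^ l₁) * (z ^ k₂ * y * x ^ l₂))
        - Δ (z ^ k₁ * y * x ^ l₁) * (z ^ k₂ * y * x ^ l₂)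
        + (z ^ k₁ * y * x ^ l₁) * Δ (z ^ k₂ * y * x ^ l₂))
      = ((l₂ : ℤ) - (l₁ : ℤ)) • (z ^ (k₁ + k₂) * y * x ^ (l₁ + l₂) * x ^ (n - 1)) := by
  have hprod : (z ^ k₁ * y * x ^ l₁) * (z ^ k₂ * y * x ^ l₂) = 0 := by
    linear_combination (z ^ k₁ * x ^ l₁ * z ^ k₂ * x ^ l₂) * hy
  rw [hprod, hΔzero, hΔodd, hΔodd]
  simp only [zsmul_eq_mul, Int.cast_sub, Int.cast_natCast, Int.cast_one]
  ring

end BracketOfMonomials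

theorem gerstenhaber_bracket_cyclic_group_ring_char_p_general
    (R : Type) [CommRing R] (n : ℕ)
    (B : Type) [CommRing B] [Algebra R B]
    (x y z : B)
    (hy : y ^ 2 = 0)
    (Δ : B →ₗ[R] B)
    (hΔeven : ∀ k l : ℕ, Δ (z ^ k * x ^ l) = 0)
    (hΔodd : ∀ k l : ℕ, Δ (z ^ k * y * x ^ l) = ((l : ℤ) - 1) • (z ^ k * x ^ l * x ^ (n - 1)))
    (k₁ l₁ k₂ l₂ : ℕ) :
    -- {z^{k₁}x^{l₁}, z^{k₂}x^{l₂}} = 0  (both degrees even)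
    -(Δ ((z ^ k₁ * x ^ l₁) * (z ^ k₂ * x ^ l₂))
        - Δ (z ^ k₁ * x ^ l₁) * (z ^ k₂ * x ^ l₂)
        - (z ^ k₁ * x ^ l₁) * Δ (z ^ k₂ * x ^ l₂)) = 0 ∧
    -- {z^{k₁}x^{l₁}, z^{k₂}y x^{l₂}} = −l₁ z^{k₁+k₂} x^{l₁+l₂−1}  (first degree even)
    -(Δ ((z ^ k₁ * x ^ l₁) * (z ^ k₂ * y * x ^ l₂))
        - Δ (z ^ k₁ * x ^ l₁) * (z ^ k₂ * y * x ^ l₂)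
        - (z ^ k₁ * x ^ l₁) * Δ (z ^ k₂ * y * x ^ l₂))
      = -((l₁ : ℤ) • (z ^ (k₁ + k₂) * x ^ (l₁ + l₂) * x ^ (n - 1))) ∧
    -- {z^{k₁}y x^{l₁}, z^{k₂}y x^{l₂}} = (l₂−l₁) z^{k₁+k₂} y x^{l₁+l₂−1}  (both odd)
    (Δ ((z ^ k₁ * y * x ^ l₁) * (z ^ k₂ * y * x ^ l₂))
        - Δ (z ^ k₁ * y * x ^ l₁) * (z ^ k₂ * y * x ^ l₂)
        + (z ^ k₁ * y * x ^ l₁) * Δ (z ^ k₂ * y * x ^ l₂))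
      = ((l₂ : ℤ) - (l₁ : ℤ)) • (z ^ (k₁ + k₂) * y * x ^ (l₁ + l₂) * x ^ (n - 1)) :=
  ⟨bracket_even_even_eq_zero hΔeven k₁ l₁ k₂ l₂,
    bracket_even_odd_eq hΔeven hΔodd k₁ l₁ k₂ l₂,
    bracket_odd_odd_eq hy (map_zero Δ) hΔodd k₁ l₁ k₂ l₂⟩

theorem gerstenhaber_bracket_cyclic_group_ring_char_p
    (R : Type) [CommRing R] (p m n : ℕ) (hp : 0 < p) (hm : 0 < m) [CharP R p]
    (hn : n = m * p)
    (B : Type) [CommRing B] [Algebra R B]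
    (x y z : B)
    (hx : x ^ n = 1) (hy : y ^ 2 = 0)
    (Δ : B →ₗ[R] B)
    (hΔeven : ∀ k l : ℕ, Δ (z ^ k * x ^ l) = 0)
    (hΔodd : ∀ k l : ℕ, Δ (z ^ k * y * x ^ l) = ((l : ℤ) - 1) • (z ^ k * x ^ l * x ^ (n - 1)))
    (k₁ l₁ k₂ l₂ : ℕ) :
    -- {z^{k₁}x^{l₁}, z^{k₂}x^{l₂}} = 0  (both degrees even)
    -(Δ ((z ^ k₁ * x ^ l₁) * (z ^ k₂ * x ^ l₂))
        - Δ (z ^ k₁ * x ^ l₁) * (z ^ k₂ * x ^ l₂)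
        - (z ^ k₁ * x ^ l₁) * Δ (z ^ k₂ * x ^ l₂)) = 0 ∧
    -- {z^{k₁}x^{l₁}, z^{k₂}y x^{l₂}} = −l₁ z^{k₁+k₂} x^{l₁+l₂−1}  (first degree even)
    -(Δ ((z ^ k₁ * x ^ l₁) * (z ^ k₂ * y * x ^ l₂))
        - Δ (z ^ k₁ * x ^ l₁) * (z ^ k₂ * y * x ^ l₂)
        - (z ^ k₁ * x ^ l₁) * Δ (z ^ k₂ * y * x ^ l₂))
      = -((l₁ : ℤ) • (z ^ (k₁ + k₂) * x ^ (l₁ + l₂) * x ^ (n - 1))) ∧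
    -- {z^{k₁}y x^{l₁}, z^{k₂}y x^{l₂}} = (l₂−l₁) z^{k₁+k₂} y x^{l₁+l₂−1}  (both odd)
    (Δ ((z ^ k₁ * y * x ^ l₁) * (z ^ k₂ * y * x ^ l₂))
        - Δ (z ^ k₁ * y * x ^ l₁) * (z ^ k₂ * y * x ^ l₂)
        + (z ^ k₁ * y * x ^ l₁) * Δ (z ^ k₂ * y * x ^ l₂))
      = ((l₂ : ℤ) - (l₁ : ℤ)) • (z ^ (k₁ + k₂) * y * x ^ (l₁ + l₂) * x ^ (n - 1)) :=
  gerstenhaber_bracket_cyclic_group_ring_char_p_general R n B x y z hy Δ hΔeven hΔodd k₁ l₁ k₂ l₂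
end

section
/- There is an isomorphism of BV-algebras between HH^*(R[Z];R[Z]) with Δ given by the unit t⁻¹ (so Δ(y^r x^i) = r(i−1)x^{i−1} on R[x,x⁻¹]⊗Λ(y), |x|=0, |y|=1) and the loop homology BV-algebra H_*(LS¹;R) ≅ R[x,x⁻¹]⊗Λ(z) with |x|=0, |z|=−1 (regraded) and Δ(z x^i) = i x^i, Δ(x^i) = 0; the isomorphism sends x ↦ x and z ↦ yx. -/
open LaurentPolynomial TrivSqZeroExt

noncomputable section

/-- The graded algebra `R[x,x⁻¹] ⊗ Λ(y)` underlying both `HH^*(R[ℤ];R[ℤ])` and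
`H_*(LS¹;R)`, modelled as the trivial square-zero extension (dual numbers) of the
Laurent polynomial ring: `inl p` is the even part (polynomial in `x, x⁻¹`), and
`inr q` is the odd part (`q·y`, resp. `q·z`). -/
abbrev LoopHH (R : Type) [CommRing R] : Type :=
  DualNumber (LaurentPolynomial R)

/-! Multiplying the odd part by the unit `x` is an algebra automorphism fixing `x`; it sends
`z xⁱ` to `y xⁱ⁺¹`, on which `Δ_{t⁻¹}` gives `i xⁱ`, the value of the loop-homology `Δ` on
`z xⁱ`. Both sides being linear, agreement on the monomials `xⁱ`, `z xⁱ` suffices. -/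

namespace TrivSqZeroExt

variable {R : Type*} {M N : Type*} [CommSemiring R] [AddCommMonoid M] [Module R M]
  [Module Rᵐᵒᵖ M] [IsCentralScalar R M] [AddCommMonoid N] [Module R N] [Module Rᵐᵒᵖ N]
  [IsCentralScalar R N]

def mapEquiv (e : M ≃ₗ[R] N) : TrivSqZeroExt R M ≃ₐ[R] TrivSqZeroExt R N :=
  AlgEquiv.ofAlgHom (map e) (map e.symm)
    (by rw [← map_comp_map]; simp) (by rw [← map_comp_map]; simp)

end TrivSqZeroExt

theorem LaurentPolynomial.linearMap_ext {R M : Type*} [CommSemiring R] [AddCommMonoid M]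
    [Module R M] ⦃f g : R[T;T⁻¹] →ₗ[R] M⦄ (h : ∀ n : ℤ, f (T n) = g (T n)) : f = g :=
  AddMonoidAlgebra.lhom_ext' fun n => LinearMap.ext_ring (h n)

namespace LoopHH

variable {R : Type} [CommRing R]

theorem linearMap_ext {M : Type*} [AddCommMonoid M] [Module R M] ⦃f g : LoopHH R →ₗ[R] M⦄
    (hl : ∀ i : ℤ, f (inl (T i)) = g (inl (T i)))
    (hr : ∀ i : ℤ, f (inr (T i)) = g (inr (T i))) :
    f = g :=
  TrivSqZeroExt.linearMap_ext
    (LinearMap.congr_fun <| LaurentPolynomial.linearMap_ext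
      (f := f ∘ₗ (inlAlgHom R _ _).toLinearMap)
      (g := g ∘ₗ (inlAlgHom R _ _).toLinearMap) hl)
    (LinearMap.congr_fun <| LaurentPolynomial.linearMap_ext
      (f := f ∘ₗ (inrHom R[T;T⁻¹] R[T;T⁻¹]).restrictScalars R)
      (g := g ∘ₗ (inrHom R[T;T⁻¹] R[T;T⁻¹]).restrictScalars R) hr)

variable (R) in
def mulOddX : LoopHH R ≃ₐ[R] LoopHH R :=
  (mapEquiv (LinearEquiv.smulOfUnit (isUnit_T 1).unit)).restrictScalars R

@[simp]
theorem mulOddX_inl (p : R[T;T⁻¹]) : mulOddX R (inl p) = inl p := map_inl _ _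

@[simp]
theorem mulOddX_inr (p : R[T;T⁻¹]) : mulOddX R (inr p) = inr (T 1 * p) := map_inr _ _

end LoopHH

theorem loop_homology_iso_hochschild_cohomology_BV
    (R : Type) [CommRing R]
    (Δhh Δloop : LoopHH R →ₗ[R] LoopHH R)
    -- the BV-operator of H_*(LS¹;R):  Δ(x^i) = 0,  Δ(z x^i) = i x^i
    (hloop0 : ∀ i : ℤ, Δloop (inl (T i)) = 0)
    (hloop1 : ∀ i : ℤ, Δloop (inr (T i)) = (i : ℤ) • inl (T i))
    -- the BV-operator Δ_{t⁻¹} of HH^*(R[ℤ];R[ℤ]):  Δ(x^i) = 0,  Δ(y x^i) = (i−1) x^{i−1}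
    (hhh0 : ∀ i : ℤ, Δhh (inl (T i)) = 0)
    (hhh1 : ∀ i : ℤ, Δhh (inr (T i)) = ((i : ℤ) - 1) • inl (T (i - 1))) :
    ∃ φ : LoopHH R ≃ₐ[R] LoopHH R,
      φ (inl (T 1)) = inl (T 1) ∧
      φ (inr 1) = inr (T 1) ∧
      ∀ c : LoopHH R, φ (Δloop c) = Δhh (φ c) := by
  set φ := LoopHH.mulOddX R
  have intertwine : φ.toLinearMap ∘ₗ Δloop = Δhh ∘ₗ φ.toLinearMap := by
    refine LoopHH.linearMap_ext (fun i => ?_) (fun i => ?_)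
    · simp only [LinearMap.comp_apply, AlgEquiv.toLinearMap_apply, φ, LoopHH.mulOddX_inl,
        hloop0, hhh0, map_zero]
    · rw [LinearMap.comp_apply, LinearMap.comp_apply, AlgEquiv.toLinearMap_apply,
        AlgEquiv.toLinearMap_apply, LoopHH.mulOddX_inr, ← T_add, hloop1, hhh1, map_zsmul,
        LoopHH.mulOddX_inl, add_sub_cancel_left]
  exact ⟨φ, LoopHH.mulOddX_inl _, by rw [LoopHH.mulOddX_inr, mul_one],
    LinearMap.congr_fun intertwine⟩

end
end

section
/- Let R = F_p with p an odd prime, and consider the algebra isomorphism φ from HH^*(F_p[x]/(x^p)) ≅ F_p[x,v,t]/(x^p, v²) to HH^*(F_p[Z/pZ]) ≅ F_p[X,y,z]/(X^p−1, y²) sending x ↦ X−1, v ↦ y, t ↦ z. Then φ intertwines the BV-operators, using the key congruence Σ_{i=k}^{p−1} binom(i,k) = binom(p,k+1) ≡ 0 (mod p) for 1 ≤ k ≤ p−2; in particular Σ_{i=0}^{p−1}(−1)^{i+1}(X−1)^i ≡ −X^{p−1} (mod p). -/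
section AuxiliaryLemmas

open MvPolynomial Finset

private lemma tele {B : Type*} [CommRing B] (u : B) (n : ℕ) :
    (1 + u) * ∑ i ∈ Finset.range n, (-1 : B) ^ i * u ^ i
      = 1 - (-1 : B) ^ n * u ^ n := by
  induction n with
  | zero => simp
  | succ n ih => rw [Finset.sum_range_succ, mul_add, ih]; ring

private lemma I1m {B : Type*} [CommRing B] (x : B) (m : ℕ) :
    (x - 1) ^ m = ∑ j ∈ Finset.range (m + 1), (-1 : B) ^ (m - j) * (m.choose j : B) * x ^ j := by
  rw [sub_eq_add_neg, add_pow]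
  exact Finset.sum_congr rfl fun j _ => by ring

private lemma I2m {B : Type*} [CommRing B] (x : B) (m : ℕ) :
    ∑ j ∈ Finset.range (m + 1), (-1 : B) ^ (m - j) * (m.choose j : B) * (j : B) * x ^ j
      = (m : B) * (x * (x - 1) ^ (m - 1)) := by
  cases m with
  | zero => simp
  | succ m =>
    rw [Finset.sum_range_succ']
    simp only [Nat.cast_zero, mul_zero, zero_mul, add_zero, Nat.succ_sub_one]
    rw [I1m x m, Finset.mul_sum]
    rw [Finset.mul_sum]
    apply Finset.sum_congr rfl
    intro i hi
    have hc' : ((m : B) + 1) * (m.choose i : B) = ((m + 1).choose (i + 1) : B) * ((i : B) + 1) := by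
      exact_mod_cast congrArg (Nat.cast : ℕ → B) (Nat.add_one_mul_choose_eq m i)
    rw [Nat.succ_sub_succ]
    push_cast
    linear_combination (-(-1 : B) ^ (m - i) * x ^ (i + 1)) * hc'

private lemma mon3 {R : Type*} [CommSemiring R] (d : Fin 3 →₀ ℕ) :
    (monomial d 1 : MvPolynomial (Fin 3) R) = X 0 ^ d 0 * X 1 ^ d 1 * X 2 ^ d 2 := by
  rw [monomial_eq, C_1, one_mul, Finsupp.prod_fintype _ _ (fun i => pow_zero _),
    Fin.prod_univ_three]

end AuxiliaryLemmas

noncomputable section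

open MvPolynomial

/-- `HH^*(F_p[x]/(x^p)) ≅ F_p[x,v,t]/(x^p, v²)` with |x|=0, |v|=1, |t|=2
(generators `X 0 = x`, `X 1 = v`, `X 2 = t`). -/
abbrev HHtrunc (p : ℕ) : Type :=
  MvPolynomial (Fin 3) (ZMod p) ⧸
    Ideal.span {(X 0 : MvPolynomial (Fin 3) (ZMod p)) ^ p, (X 1 : MvPolynomial (Fin 3) (ZMod p)) ^ 2}

/-- `HH^*(F_p[ℤ/pℤ]) ≅ F_p[X,y,z]/(X^p−1, y²)` with |X|=0, |y|=1, |z|=2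
(generators `X 0 = X`, `X 1 = y`, `X 2 = z`). -/
abbrev HHcyc (p : ℕ) : Type :=
  MvPolynomial (Fin 3) (ZMod p) ⧸
    Ideal.span {(X 0 : MvPolynomial (Fin 3) (ZMod p)) ^ p - 1, (X 1 : MvPolynomial (Fin 3) (ZMod p)) ^ 2}

/-
STATEMENT 19: Let p be an odd prime, and consider the algebra isomorphism
φ : HH^*(F_p[x]/(x^p)) ≅ F_p[x,v,t]/(x^p, v²) → HH^*(F_p[ℤ/pℤ]) ≅ F_p[X,y,z]/(X^p−1, y²)
sending x ↦ X−1, v ↦ y, t ↦ z.  Then φ intertwines the BV-operators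
(Δ̃ on the source, from the transferred Frobenius form, with
 Δ̃(t^l x^k)=0, Δ̃(t^k v x^{2l}) = 2l t^k x^{2l−1} + Σ_{i=2l}^{p−1}(−1)^{i+1} t^k x^i,
 Δ̃(t^k v x^{2l+1}) = (2l+1) t^k x^{2l} + Σ_{i=2l+1}^{p−1}(−1)^i t^k x^i;
 Δ on the target with Δ(z^k X^l)=0, Δ(z^k y X^l) = (l−1) z^k X^{l−1}),
using the key congruence Σ_{i=k}^{p−1} C(i,k) = C(p,k+1) ≡ 0 (mod p) for 1 ≤ k ≤ p−2;
in particular Σ_{i=0}^{p−1} (−1)^{i+1} (X−1)^i ≡ −X^{p−1} (mod p).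
-/
set_option maxHeartbeats 2000000 in
theorem BV_iso_truncated_polynomial_vs_group_ring
    (p : ℕ) (hp : p.Prime) (hodd : p ≠ 2)
    (φ : HHtrunc p →ₐ[ZMod p] HHcyc p)
    (hφx : φ (Ideal.Quotient.mk _ (X 0)) = Ideal.Quotient.mk _ (X 0) - 1)
    (hφv : φ (Ideal.Quotient.mk _ (X 1)) = Ideal.Quotient.mk _ (X 1))
    (hφt : φ (Ideal.Quotient.mk _ (X 2)) = Ideal.Quotient.mk _ (X 2))
    (Δt : HHtrunc p →ₗ[ZMod p] HHtrunc p)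
    (Δc : HHcyc p →ₗ[ZMod p] HHcyc p)
    -- Δ̃ on HH^*(F_p[x]/(x^p))  (x := X 0, v := X 1, t := X 2)
    (hΔt0 : ∀ l k : ℕ,
      Δt (Ideal.Quotient.mk _ (X 2 ^ l * X 0 ^ k)) = 0)
    (hΔtEven : ∀ k l : ℕ,
      Δt (Ideal.Quotient.mk _ (X 2 ^ k * X 1 * X 0 ^ (2 * l)))
        = (2 * l : ℤ) • Ideal.Quotient.mk _ (X 2 ^ k * X 0 ^ (2 * l - 1))
          + ∑ i ∈ Finset.Icc (2 * l) (p - 1),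
              ((-1 : ℤ) ^ (i + 1)) • Ideal.Quotient.mk _ (X 2 ^ k * X 0 ^ i))
    (hΔtOdd : ∀ k l : ℕ,
      Δt (Ideal.Quotient.mk _ (X 2 ^ k * X 1 * X 0 ^ (2 * l + 1)))
        = (2 * l + 1 : ℤ) • Ideal.Quotient.mk _ (X 2 ^ k * X 0 ^ (2 * l))
          + ∑ i ∈ Finset.Icc (2 * l + 1) (p - 1),
              ((-1 : ℤ) ^ i) • Ideal.Quotient.mk _ (X 2 ^ k * X 0 ^ i))
    -- Δ on HH^*(F_p[ℤ/pℤ])  (X := X 0, y := X 1, z := X 2; X^{l−1} = X^l·X^{p−1})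
    (hΔc0 : ∀ k l : ℕ,
      Δc (Ideal.Quotient.mk _ (X 2 ^ k * X 0 ^ l)) = 0)
    (hΔc1 : ∀ k l : ℕ,
      Δc (Ideal.Quotient.mk _ (X 2 ^ k * X 1 * X 0 ^ l))
        = ((l : ℤ) - 1) • Ideal.Quotient.mk _ (X 2 ^ k * X 0 ^ l * X 0 ^ (p - 1))) :
    -- the hockey-stick identity and the key congruence mod p
    (∀ k : ℕ, 1 ≤ k → k ≤ p - 2 →
      (∑ i ∈ Finset.Icc k (p - 1), i.choose k) = p.choose (k + 1) ∧ p ∣ p.choose (k + 1)) ∧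
    -- in particular Σ_{i=0}^{p−1} (−1)^{i+1}(X−1)^i = −X^{p−1} in F_p[X,y,z]/(X^p−1,y²)
    (∑ i ∈ Finset.range p,
        ((-1 : ℤ) ^ (i + 1)) • ((Ideal.Quotient.mk _ (X 0) : HHcyc p) - 1) ^ i)
      = -((Ideal.Quotient.mk _ (X 0) : HHcyc p)) ^ (p - 1) ∧
    -- φ intertwines the BV-operators
    (∀ q : HHtrunc p, φ (Δt q) = Δc (φ q)) := by
  haveI hfact : Fact p.Prime := ⟨hp⟩
  haveI hf1 : Fact (1 < p) := ⟨hp.one_lt⟩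
  -- nontriviality of HHcyc p
  haveI hnt : Nontrivial (HHcyc p) := by
    have hker : Ideal.span {(X 0 : MvPolynomial (Fin 3) (ZMod p)) ^ p - 1,
        (X 1 : MvPolynomial (Fin 3) (ZMod p)) ^ 2}
        ≤ RingHom.ker (MvPolynomial.eval (fun i : Fin 3 => if i = 0 then (1 : ZMod p) else 0)) := by
      rw [Ideal.span_le]
      rintro g hg
      simp only [Set.mem_insert_iff, Set.mem_singleton_iff] at hg
      rcases hg with rfl | rfl <;>
        simp [RingHom.mem_ker]
    refine ⟨⟨1, 0, fun h01 => ?_⟩⟩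
    have h2 := congrArg (Ideal.Quotient.lift _ _ (fun a ha => hker ha)) h01
    simp only [map_one, map_zero] at h2
    exact one_ne_zero h2
  haveI : CharP (HHcyc p) p := charP_of_injective_ringHom (algebraMap (ZMod p) (HHcyc p)).injective p
  set xq : HHcyc p := Ideal.Quotient.mk _ (X 0) with hxqdef
  set yq : HHcyc p := Ideal.Quotient.mk _ (X 1) with hyqdef
  set zq : HHcyc p := Ideal.Quotient.mk _ (X 2) with hzqdef
  -- basic ring facts
  have hxp : xq ^ p = 1 := by
    have h0 : (Ideal.Quotient.mk _ ((X 0 : MvPolynomial (Fin 3) (ZMod p)) ^ p - 1) : HHcyc p)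
        = 0 := Ideal.Quotient.eq_zero_iff_mem.mpr (Ideal.subset_span (by simp))
    rw [map_sub, map_pow, map_one, sub_eq_zero] at h0
    exact h0
  have hup : (xq - 1) ^ p = 0 := by
    rw [sub_pow_char, one_pow, hxp, sub_self]
  have hu0 : ∀ n : ℕ, p ≤ n → (xq - 1) ^ n = 0 := by
    intro n hn
    rw [show n = p + (n - p) by omega, pow_add, hup, zero_mul]
  have hxx : xq ^ (p - 1) * xq = 1 := by
    rw [← pow_succ, Nat.sub_add_cancel hp.one_le, hxp]
  have hS : (∑ i ∈ Finset.range p, (-1 : HHcyc p) ^ i * (xq - 1) ^ i) = xq ^ (p - 1) := by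
    have ht := tele (xq - 1) p
    rw [hup, mul_zero, sub_zero, show (1 : HHcyc p) + (xq - 1) = xq by ring] at ht
    calc (∑ i ∈ Finset.range p, (-1 : HHcyc p) ^ i * (xq - 1) ^ i)
        = (xq ^ (p - 1) * xq) * ∑ i ∈ Finset.range p, (-1 : HHcyc p) ^ i * (xq - 1) ^ i := by
          rw [hxx, one_mul]
      _ = xq ^ (p - 1) * (xq * ∑ i ∈ Finset.range p, (-1 : HHcyc p) ^ i * (xq - 1) ^ i) :=
          mul_assoc _ _ _
      _ = xq ^ (p - 1) := by rw [ht, mul_one]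
  -- the shifted key identity
  have hK : ∀ m : ℕ, (∑ i ∈ Finset.Icc m (p - 1), (-1 : HHcyc p) ^ (i + m) * (xq - 1) ^ i)
      = xq ^ (p - 1) * (xq - 1) ^ m := by
    intro m
    rw [← Finset.Ico_add_one_right_eq_Icc, show p - 1 + 1 = p from by have := hp.one_le; omega, Finset.sum_Ico_eq_sum_range]
    calc (∑ i ∈ Finset.range (p - m), (-1 : HHcyc p) ^ ((m + i) + m) * (xq - 1) ^ (m + i))
        = ∑ i ∈ Finset.range (p - m), ((-1 : HHcyc p) ^ i * (xq - 1) ^ i) * (xq - 1) ^ m := by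
          refine Finset.sum_congr rfl fun i _ => ?_
          rw [show (m + i) + m = i + 2 * m by ring, pow_add (-1 : HHcyc p),
            (even_two_mul m).neg_one_pow (α := HHcyc p), mul_one, show m + i = i + m by ring, pow_add]
          ring
      _ = ∑ i ∈ Finset.range p, ((-1 : HHcyc p) ^ i * (xq - 1) ^ i) * (xq - 1) ^ m := by
          refine Finset.sum_subset (Finset.range_subset_range.mpr (by omega)) ?_
          intro i hi hni
          simp only [Finset.mem_range] at hi hni
          rw [mul_assoc, ← pow_add, hu0 (i + m) (by omega), mul_zero]
      _ = (∑ i ∈ Finset.range p, (-1 : HHcyc p) ^ i * (xq - 1) ^ i) * (xq - 1) ^ m :=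
          (Finset.sum_mul _ _ _).symm
      _ = xq ^ (p - 1) * (xq - 1) ^ m := by rw [hS]
  -- quotient map computations
  have hmkc0 : ∀ k e : ℕ, (Ideal.Quotient.mk _ (X 2 ^ k * X 0 ^ e) : HHcyc p)
      = zq ^ k * xq ^ e := by
    intro k e
    rw [map_mul, map_pow, map_pow]
  have hmkc0' : ∀ k e : ℕ, (Ideal.Quotient.mk _ (X 2 ^ k * X 0 ^ e * X 0 ^ (p - 1)) : HHcyc p)
      = zq ^ k * (xq ^ e * xq ^ (p - 1)) := by
    intro k e
    rw [map_mul, map_mul, map_pow, map_pow, map_pow, mul_assoc]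
  have hmkc1 : ∀ k e : ℕ, (Ideal.Quotient.mk _ (X 2 ^ k * X 1 * X 0 ^ e) : HHcyc p)
      = zq ^ k * (yq * xq ^ e) := by
    intro k e
    rw [map_mul, map_mul, map_pow, map_pow, mul_assoc]
  have hφmon0 : ∀ k e : ℕ, φ (Ideal.Quotient.mk _ (X 2 ^ k * X 0 ^ e))
      = zq ^ k * (xq - 1) ^ e := by
    intro k e
    rw [map_mul, map_pow, map_pow, map_mul, map_pow, map_pow, hφt, hφx]
  have hφmon1 : ∀ k e : ℕ, φ (Ideal.Quotient.mk _ (X 2 ^ k * X 1 * X 0 ^ e))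
      = zq ^ k * (yq * (xq - 1) ^ e) := by
    intro k e
    rw [map_mul, map_mul, map_pow, map_pow, map_mul, map_mul, map_pow, map_pow,
      hφt, hφv, hφx, mul_assoc]
  refine ⟨?_, ?_, ?_⟩
  · -- part 1: hockey stick + divisibility
    intro k hk1 hk2
    have h2 := hp.two_le
    constructor
    · have h := Nat.sum_Icc_choose (p - 1) k
      rwa [Nat.sub_add_cancel hp.one_le] at h
    · exact hp.dvd_choose_self (by omega) (by omega)
  · -- part 2
    calc (∑ i ∈ Finset.range p, ((-1 : ℤ) ^ (i + 1)) • (xq - 1) ^ i)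
        = ∑ i ∈ Finset.range p, -((-1 : HHcyc p) ^ i * (xq - 1) ^ i) := by
          refine Finset.sum_congr rfl fun i _ => ?_
          rw [zsmul_eq_mul]
          push_cast
          ring
      _ = -∑ i ∈ Finset.range p, (-1 : HHcyc p) ^ i * (xq - 1) ^ i := Finset.sum_neg_distrib _
      _ = -xq ^ (p - 1) := by rw [hS]
  · -- part 3
    -- LHS formula
    have hLHS : ∀ m k : ℕ, φ (Δt (Ideal.Quotient.mk _ (X 2 ^ k * X 1 * X 0 ^ m)))
        = (m : ℤ) • (zq ^ k * (xq - 1) ^ (m - 1)) - zq ^ k * (xq ^ (p - 1) * (xq - 1) ^ m) := by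
      intro m k
      have hsum : ∀ m' : ℕ, (∑ i ∈ Finset.Icc m' (p - 1),
            (-1 : HHcyc p) ^ (i + m' + 1) * (zq ^ k * (xq - 1) ^ i))
          = -(zq ^ k * (xq ^ (p - 1) * (xq - 1) ^ m')) := by
        intro m'
        calc (∑ i ∈ Finset.Icc m' (p - 1),
              (-1 : HHcyc p) ^ (i + m' + 1) * (zq ^ k * (xq - 1) ^ i))
            = ∑ i ∈ Finset.Icc m' (p - 1),
              -(zq ^ k * ((-1 : HHcyc p) ^ (i + m') * (xq - 1) ^ i)) := by
              refine Finset.sum_congr rfl fun i _ => ?_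
              have hps : (-1 : HHcyc p) ^ (i + m' + 1) = -(-1 : HHcyc p) ^ (i + m') := by
                rw [pow_succ]; ring
              rw [hps]
              ring
          _ = -(zq ^ k * ∑ i ∈ Finset.Icc m' (p - 1),
              (-1 : HHcyc p) ^ (i + m') * (xq - 1) ^ i) := by
              rw [Finset.sum_neg_distrib, Finset.mul_sum]
          _ = -(zq ^ k * (xq ^ (p - 1) * (xq - 1) ^ m')) := by rw [hK]
      rcases Nat.even_or_odd m with hm | hm
      · obtain ⟨l, rfl⟩ := hm
        rw [show l + l = 2 * l by ring] at *
        rw [hΔtEven k l, map_add, map_zsmul, map_sum]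
        simp only [map_zsmul, hφmon0]
        have hs' : (∑ i ∈ Finset.Icc (2 * l) (p - 1),
              ((-1 : ℤ) ^ (i + 1)) • (zq ^ k * (xq - 1) ^ i))
            = -(zq ^ k * (xq ^ (p - 1) * (xq - 1) ^ (2 * l))) := by
          rw [← hsum (2 * l)]
          refine Finset.sum_congr rfl fun i _ => ?_
          rw [zsmul_eq_mul]
          push_cast
          rw [show i + 2 * l + 1 = (i + 1) + 2 * l by ring, pow_add (-1 : HHcyc p) (i + 1),
            (even_two_mul l).neg_one_pow (α := HHcyc p), mul_one]
        rw [hs']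
        simp only [zsmul_eq_mul]
        push_cast
        ring
      · obtain ⟨l, rfl⟩ := hm
        rw [hΔtOdd k l, map_add, map_zsmul, map_sum]
        simp only [map_zsmul, hφmon0]
        have hs' : (∑ i ∈ Finset.Icc (2 * l + 1) (p - 1),
              ((-1 : ℤ) ^ i) • (zq ^ k * (xq - 1) ^ i))
            = -(zq ^ k * (xq ^ (p - 1) * (xq - 1) ^ (2 * l + 1))) := by
          rw [← hsum (2 * l + 1)]
          refine Finset.sum_congr rfl fun i _ => ?_
          rw [zsmul_eq_mul]
          push_cast
          rw [show i + (2 * l + 1) + 1 = i + 2 * (l + 1) by ring, pow_add (-1 : HHcyc p) i,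
            (even_two_mul (l + 1)).neg_one_pow (α := HHcyc p), mul_one]
        rw [hs']
        simp only [zsmul_eq_mul, Nat.add_sub_cancel]
        push_cast
        ring
    -- RHS formula
    have hRHS : ∀ m k : ℕ, Δc (zq ^ k * (yq * (xq - 1) ^ m))
        = (m : ℤ) • (zq ^ k * (xq - 1) ^ (m - 1)) - zq ^ k * (xq ^ (p - 1) * (xq - 1) ^ m) := by
      intro m k
      have hexp : zq ^ k * (yq * (xq - 1) ^ m)
          = ∑ j ∈ Finset.range (m + 1), ((-1 : ℤ) ^ (m - j) * (m.choose j : ℤ)) •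
              (Ideal.Quotient.mk _ (X 2 ^ k * X 1 * X 0 ^ j) : HHcyc p) := by
        rw [I1m xq m, Finset.mul_sum, Finset.mul_sum]
        refine Finset.sum_congr rfl fun j _ => ?_
        rw [hmkc1, zsmul_eq_mul]
        push_cast
        ring
      rw [hexp, map_sum]
      simp only [map_zsmul, hΔc1, hmkc0']
      calc (∑ j ∈ Finset.range (m + 1), ((-1 : ℤ) ^ (m - j) * (m.choose j : ℤ)) •
              (((j : ℤ) - 1) • (zq ^ k * (xq ^ j * xq ^ (p - 1)))))
          = ∑ j ∈ Finset.range (m + 1),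
              ((zq ^ k * xq ^ (p - 1)) * ((-1 : HHcyc p) ^ (m - j) * (m.choose j : HHcyc p) * (j : HHcyc p) * xq ^ j)
               - (zq ^ k * xq ^ (p - 1)) * ((-1 : HHcyc p) ^ (m - j) * (m.choose j : HHcyc p) * xq ^ j)) := by
            refine Finset.sum_congr rfl fun j _ => ?_
            rw [smul_smul, zsmul_eq_mul]
            push_cast
            ring
        _ = (zq ^ k * xq ^ (p - 1)) * (∑ j ∈ Finset.range (m + 1),
              (-1 : HHcyc p) ^ (m - j) * (m.choose j : HHcyc p) * (j : HHcyc p) * xq ^ j)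
            - (zq ^ k * xq ^ (p - 1)) * (∑ j ∈ Finset.range (m + 1),
              (-1 : HHcyc p) ^ (m - j) * (m.choose j : HHcyc p) * xq ^ j) := by
            rw [Finset.sum_sub_distrib, Finset.mul_sum, Finset.mul_sum]
        _ = (zq ^ k * xq ^ (p - 1)) * ((m : HHcyc p) * (xq * (xq - 1) ^ (m - 1)))
            - (zq ^ k * xq ^ (p - 1)) * (xq - 1) ^ m := by
            rw [I2m, ← I1m]
        _ = (m : ℤ) • (zq ^ k * (xq - 1) ^ (m - 1)) - zq ^ k * (xq ^ (p - 1) * (xq - 1) ^ m) := by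
            rw [zsmul_eq_mul]
            push_cast
            linear_combination ((m : HHcyc p) * zq ^ k * (xq - 1) ^ (m - 1)) * hxx
    -- monomial case
    have hmain : ∀ a b k : ℕ,
        φ (Δt (Ideal.Quotient.mk _ (X 0 ^ a * X 1 ^ b * X 2 ^ k)))
          = Δc (φ (Ideal.Quotient.mk _ (X 0 ^ a * X 1 ^ b * X 2 ^ k))) := by
      intro a b k
      rcases b with _ | _ | b
      · -- b = 0
        rw [show (X 0 ^ a * X 1 ^ 0 * X 2 ^ k : MvPolynomial (Fin 3) (ZMod p))
            = X 2 ^ k * X 0 ^ a by ring]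
        rw [hΔt0 k a, map_zero, hφmon0]
        have hexp0 : zq ^ k * (xq - 1) ^ a
            = ∑ j ∈ Finset.range (a + 1), ((-1 : ℤ) ^ (a - j) * (a.choose j : ℤ)) •
                (Ideal.Quotient.mk _ (X 2 ^ k * X 0 ^ j) : HHcyc p) := by
          rw [I1m xq a, Finset.mul_sum]
          refine Finset.sum_congr rfl fun j _ => ?_
          rw [hmkc0, zsmul_eq_mul]
          push_cast
          ring
        rw [hexp0, map_sum]
        simp only [map_zsmul, hΔc0, smul_zero, Finset.sum_const_zero]
      · -- b = 1
        rw [show (X 0 ^ a * X 1 ^ 1 * X 2 ^ k : MvPolynomial (Fin 3) (ZMod p))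
            = X 2 ^ k * X 1 * X 0 ^ a by ring]
        rw [hLHS a k, hφmon1, hRHS a k]
      · -- b ≥ 2
        have h0 : (Ideal.Quotient.mk _ (X 0 ^ a * X 1 ^ (b + 2) * X 2 ^ k) : HHtrunc p) = 0 := by
          refine Ideal.Quotient.eq_zero_iff_mem.mpr ?_
          rw [show (X 0 ^ a * X 1 ^ (b + 2) * X 2 ^ k : MvPolynomial (Fin 3) (ZMod p))
              = X 1 ^ 2 * (X 0 ^ a * X 1 ^ b * X 2 ^ k) by ring]
          exact Ideal.mul_mem_right _ _ (Ideal.subset_span (by simp))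
        rw [h0]
        simp only [map_zero]
    -- conclude
    intro q
    obtain ⟨P, rfl⟩ := Ideal.Quotient.mk_surjective q
    induction P using MvPolynomial.induction_on' with
    | add P Q hP hQ => simp only [map_add, hP, hQ]
    | monomial d a =>
      have hmono : (monomial d a : MvPolynomial (Fin 3) (ZMod p))
          = a • (X 0 ^ d 0 * X 1 ^ d 1 * X 2 ^ d 2) := by
        rw [← mon3 d, smul_monomial, smul_eq_mul, mul_one]
      rw [hmono]
      have hqsmul : (Ideal.Quotient.mk _ (a • (X 0 ^ d 0 * X 1 ^ d 1 * X 2 ^ d 2)) : HHtrunc p)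
          = a • Ideal.Quotient.mk _ (X 0 ^ d 0 * X 1 ^ d 1 * X 2 ^ d 2) := by
        rw [← Ideal.Quotient.mkₐ_eq_mk (ZMod p), map_smul]
      rw [hqsmul, map_smul, map_smul, map_smul, map_smul, hmain]

end
end
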